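/- arXiv:math/0601463 — 3 statements merged into one kernel-verified Lean document; each statement's English description precedes it below -/
import Mathlib

section
/- For all nonnegative integers n, N and all 0 ≤ j ≤ N, the number of overpartitions of n whose Frobenius representation has N columns and exactly j overlined parts in the bottom row equals the number of overpartitions of n with generalized Durfee square of size N and exactly N − j overlined parts. -/
/-!
A Frobenius symbol with `N` columns and `j` overlined bottom parts amounts to three partitions:
the top row `a` (`N` distinct parts), the overlined bottom parts `c` (`j` distinct parts) and the
non-overlined bottom parts `d` (`N - j` parts), all allowing zeros. An overpartition with
generalized Durfee square `N` and `N - j` overlined parts amounts to its overlined parts `o`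
(`N - j` distinct positive parts) and its non-overlined parts, which split into `j` parts `≥ N`
(call them `A`) followed by parts in `[1, N]` (call them `β`).

Subtracting the staircase `N - 1, …, 1, 0` from `a` leaves a partition into at most `N` parts,
whose conjugate is `β`; subtracting `j - 1, …, 0` from `c` and adding `N` to every part gives `A`;
adding `N - j, …, 1` to `d` gives `o`. The weights match because
`C(N - j, 2) + (N - j) + N j = N + C(N, 2) + C(j, 2)`.
-/

namespace Paper

/-- An overpartition is represented as a list of pairs `(part, overlined?)`.
Parts are positive, the list is non-increasing in the part sizes, and among
equal parts only the final occurrence may be overlined. -/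
def IsOverpartition (l : List (ℕ × Bool)) : Prop :=
  (∀ p ∈ l, 1 ≤ p.1) ∧
  l.Chain' fun x y => y.1 < x.1 ∨ (x.1 = y.1 ∧ x.2 = false)

/-- The weight of an overpartition: the sum of its parts. -/
def opWeight (l : List (ℕ × Bool)) : ℕ := (l.map Prod.fst).sum

/-- The number of overlined parts. -/
def opOverlined (l : List (ℕ × Bool)) : ℕ := (l.filter fun p => p.2).length

/-- The difference condition of Gordon type: `λ_ℓ - λ_{ℓ+k-1} ≥ 1` if `λ_{ℓ+k-1}` is
overlined and `λ_ℓ - λ_{ℓ+k-1} ≥ 2` otherwise (indices `0`-based). -/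
def GapCond (k : ℕ) (l : List (ℕ × Bool)) : Prop :=
  ∀ m : ℕ, m + (k - 1) < l.length →
    (l.getD (m + (k - 1)) (0, false)).1 +
      (if (l.getD (m + (k - 1)) (0, false)).2 then 1 else 2) ≤ (l.getD m (0, false)).1

/-- Overpartitions counted by `B̄_{k,i}`: the Gordon difference condition holds and at
most `i - 1` parts are equal to `1`. -/
def BCond (k i : ℕ) (l : List (ℕ × Bool)) : Prop :=
  IsOverpartition l ∧ GapCond k l ∧ (l.filter fun p => p.1 == 1).length ≤ i - 1

/-- `Bbar k i n j` : the number of overpartitions of `n` with `j` overlined parts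
satisfying the `B̄_{k,i}` conditions. -/
noncomputable def Bbar (k i n j : ℕ) : ℕ :=
  Nat.card {l : List (ℕ × Bool) //
    BCond k i l ∧ opWeight l = n ∧ opOverlined l = j}

/-- The Frobenius representation of an overpartition: a two-rowed array whose top row
is a partition into distinct nonnegative parts and whose bottom row is an
overpartition into nonnegative parts where the first occurrence of a part may be
overlined. -/
structure FrobSym : Type where
  top : List ℕ
  bot : List (ℕ × Bool)
  top_sorted : top.Chain' (· > ·)
  bot_sorted : bot.Chain' fun x y => y.1 < x.1 ∨ (x.1 = y.1 ∧ y.2 = false)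
  len_eq : top.length = bot.length

/-- The number of columns of a Frobenius symbol. -/
def frobCols (F : FrobSym) : ℕ := F.top.length

/-- The weight of the overpartition represented by a Frobenius symbol. -/
def frobWeight (F : FrobSym) : ℕ :=
  F.top.length + F.top.sum + (F.bot.map Prod.fst).sum

/-- The number of non-overlined parts in the bottom row. -/
def botNonOverlined (F : FrobSym) : ℕ := (F.bot.filter fun p => !p.2).length

/-- The number of overlined parts in the bottom row. -/
def botOverlined (F : FrobSym) : ℕ := (F.bot.filter fun p => p.2).length

/-- The `m`-th successive rank (0-based): `a_m - b_m` minus the number of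
non-overlined parts among `b_{m+1}, …, b_N`. -/
def frobRank (F : FrobSym) (m : ℕ) : ℤ :=
  (F.top.getD m 0 : ℤ) - ((F.bot.getD m (0, false)).1 : ℤ) -
    (((F.bot.drop (m + 1)).filter fun p => !p.2).length : ℤ)

/-- All successive ranks lie in the interval `[-i+2, 2k-i-1]`. -/
def RankCond (k i : ℕ) (F : FrobSym) : Prop :=
  ∀ m : ℕ, m < F.top.length →
    -(i : ℤ) + 2 ≤ frobRank F m ∧ frobRank F m ≤ 2 * (k : ℤ) - i - 1

/-- `Cbar k i n j` : the number of overpartitions of `n` (counted through their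
Frobenius representation) with `j` non-overlined parts in the bottom row and all
successive ranks in `[-i+2, 2k-i-1]`. -/
noncomputable def Cbar (k i n j : ℕ) : ℕ :=
  Nat.card {F : FrobSym //
    frobWeight F = n ∧ botNonOverlined F = j ∧ RankCond k i F}

/-- The list of overlined parts (in order). -/
def olList (l : List (ℕ × Bool)) : List ℕ := (l.filter fun p => p.2).map Prod.fst

/-- The list of non-overlined parts (in order). -/
def nolList (l : List (ℕ × Bool)) : List ℕ := (l.filter fun p => !p.2).map Prod.fst

/-- The size of the generalized Durfee square: the largest `N` such that the number of
overlined parts plus the number of non-overlined parts `≥ N` is at least `N`. -/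
noncomputable def genDurfeeSize (l : List (ℕ × Bool)) : ℕ :=
  Nat.findGreatest
    (fun N => N ≤ (olList l).length + ((nolList l).filter fun p => decide (N ≤ p)).length)
    l.length

/-- The size of the generalized Durfee rectangle: the largest `N` such that the number
of overlined parts plus the number of non-overlined parts `≥ N + 1` is at least `N`. -/
noncomputable def genDurfeeRectSize (l : List (ℕ × Bool)) : ℕ :=
  Nat.findGreatest
    (fun N => N ≤ (olList l).length + ((nolList l).filter fun p => decide (N + 1 ≤ p)).length)
    l.length

/-- The (ordinary) partition lying below the first generalized Durfee square/rectangle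
of size `N`, when the overlined parts are displayed above the non-overlined ones. -/
def belowGen (l : List (ℕ × Bool)) (N : ℕ) : List ℕ :=
  (nolList l).drop (N - (olList l).length)

/-- The size of the Durfee square of an ordinary partition. -/
noncomputable def durfeeSquareSize (μ : List ℕ) : ℕ :=
  Nat.findGreatest (fun d => d ≤ (μ.filter fun p => decide (d ≤ p)).length) μ.length

/-- The size of the `d × (d+1)` Durfee rectangle of an ordinary partition. -/
noncomputable def durfeeRectSize (μ : List ℕ) : ℕ :=
  Nat.findGreatest (fun d => d ≤ (μ.filter fun p => decide (d + 1 ≤ p)).length) μ.length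

/-- Remove `m` successive Durfee squares. -/
noncomputable def dissectSquares : ℕ → List ℕ → List ℕ
  | 0, μ => μ
  | m + 1, μ => dissectSquares m (μ.drop (durfeeSquareSize μ))

/-- Remove `m` successive Durfee rectangles. -/
noncomputable def dissectRects : ℕ → List ℕ → List ℕ
  | 0, μ => μ
  | m + 1, μ => dissectRects m (μ.drop (durfeeRectSize μ))

/-- The overpartition has `i - 1` successive Durfee squares followed by `k - i`
successive Durfee rectangles, the first one being a generalized
Durfee square (if `i ≥ 2`) or a generalized Durfee rectangle (if `i = 1`). -/
noncomputable def DurfeeCond (k i : ℕ) (l : List (ℕ × Bool)) : Prop :=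
  if 2 ≤ i then
    dissectRects (k - i) (dissectSquares (i - 2) (belowGen l (genDurfeeSize l))) = []
  else
    dissectRects (k - 2) (belowGen l (genDurfeeRectSize l)) = []

/-- `Dbar k i n j` : the number of overpartitions of `n` with `j` overlined parts and
`i-1` successive Durfee squares followed by `k-i` successive Durfee rectangles, the
first one being a generalized Durfee square/rectangle. -/
noncomputable def Dbar (k i n j : ℕ) : ℕ :=
  Nat.card {l : List (ℕ × Bool) //
    IsOverpartition l ∧ opWeight l = n ∧ opOverlined l = j ∧ DurfeeCond k i l}

/-- Among equal parts, the overlined one comes last for `b = false` (the convention of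
`IsOverpartition`) and first for `b = true` (that of `FrobSym.bot`). -/
def OverpartitionRel (b : Bool) (p q : ℕ × Bool) : Prop :=
  q.1 < p.1 ∨ (p.1 = q.1 ∧ cond b q.2 p.2 = false)

instance (b : Bool) : DecidableRel (OverpartitionRel b) :=
  fun _ _ => inferInstanceAs (Decidable (_ ∨ _))

instance (b : Bool) : Trans (OverpartitionRel b) (OverpartitionRel b) (OverpartitionRel b) where
  trans := by
    rintro ⟨x, s⟩ ⟨y, t⟩ ⟨z, u⟩ h₁ h₂
    cases b <;> cases s <;> cases t <;> cases u <;> simp_all [OverpartitionRel] <;> omega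

lemma mem_iff_olList_nolList {l : List (ℕ × Bool)} {p : ℕ × Bool} :
    p ∈ l ↔ (p.2 = true ∧ p.1 ∈ olList l) ∨ (p.2 = false ∧ p.1 ∈ nolList l) := by
  obtain ⟨x, _ | _⟩ := p <;> simp [olList, nolList]

lemma length_olList_add_length_nolList (l : List (ℕ × Bool)) :
    (olList l).length + (nolList l).length = l.length := by
  simpa [olList, nolList] using (List.length_eq_length_filter_add (·.2) (l := l)).symm

lemma opWeight_eq_sum_olList_add_sum_nolList (l : List (ℕ × Bool)) :
    opWeight l = (olList l).sum + (nolList l).sum := by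
  induction l with
  | nil => rfl
  | cons p l ih =>
    obtain ⟨x, _ | _⟩ := p <;> simp_all [opWeight, olList, nolList] <;> omega

lemma length_olList (l : List (ℕ × Bool)) : (olList l).length = opOverlined l := by
  simp [olList, opOverlined]

lemma pairwise_gt_olList {b : Bool} {l : List (ℕ × Bool)} (h : l.Pairwise (OverpartitionRel b)) :
    (olList l).Pairwise (· > ·) := by
  rw [olList, List.pairwise_map]
  refine (h.filter _).imp_of_mem fun hp hq hpq => ?_
  simp only [List.mem_filter] at hp hq
  cases b <;> simp_all [OverpartitionRel]

lemma pairwise_ge_nolList {b : Bool} {l : List (ℕ × Bool)} (h : l.Pairwise (OverpartitionRel b)) :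
    (nolList l).Pairwise (· ≥ ·) := by
  rw [nolList, List.pairwise_map]
  exact (h.filter _).imp fun hpq => by rcases hpq with h | ⟨h, _⟩ <;> omega

def mergeParts (b : Bool) : List ℕ → List ℕ → List (ℕ × Bool)
  | [], d => d.map (·, false)
  | x :: c, [] => (x, true) :: mergeParts b c []
  | x :: c, y :: d =>
    if OverpartitionRel b (x, true) (y, false) then (x, true) :: mergeParts b c (y :: d)
    else (y, false) :: mergeParts b (x :: c) d

section

variable {b : Bool}

@[simp] lemma olList_mergeParts (c d : List ℕ) : olList (mergeParts b c d) = c := by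
  induction c, d using mergeParts.induct b <;> simp_all [mergeParts, olList]

@[simp] lemma nolList_mergeParts (c d : List ℕ) : nolList (mergeParts b c d) = d := by
  induction c, d using mergeParts.induct b <;>
    simp_all [mergeParts, nolList, List.filter_map, Function.comp_def]

lemma pairwise_mergeParts {c d : List ℕ} (hc : c.Pairwise (· > ·)) (hd : d.Pairwise (· ≥ ·)) :
    (mergeParts b c d).Pairwise (OverpartitionRel b) := by
  induction c, d using mergeParts.induct b with
  | case1 d =>
    rw [mergeParts, List.pairwise_map]
    exact hd.imp fun h => by simp [OverpartitionRel]; omega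
  | case2 x c ih =>
    rw [mergeParts, List.pairwise_cons]
    refine ⟨fun p hp => ?_, ih hc.of_cons hd⟩
    simp only [mem_iff_olList_nolList, olList_mergeParts, nolList_mergeParts] at hp
    rcases hp with ⟨-, hp⟩ | ⟨-, hp⟩
    · exact Or.inl (List.rel_of_pairwise_cons hc hp)
    · simp at hp
  | case3 x c y d h ih =>
    rw [mergeParts, if_pos h, List.pairwise_cons]
    refine ⟨fun p hp => ?_, ih hc.of_cons hd⟩
    obtain ⟨z, s⟩ := p
    simp only [mem_iff_olList_nolList, olList_mergeParts, nolList_mergeParts] at hp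
    rcases hp with ⟨rfl, hp⟩ | ⟨rfl, hp⟩
    · exact Or.inl (List.rel_of_pairwise_cons hc hp)
    · have hzy : z ≤ y := by
        rcases List.mem_cons.1 hp with rfl | hp
        exacts [le_rfl, List.rel_of_pairwise_cons hd hp]
      cases b <;> simp_all [OverpartitionRel] <;> omega
  | case4 x c y d h ih =>
    rw [mergeParts, if_neg h, List.pairwise_cons]
    refine ⟨fun p hp => ?_, ih hc hd.of_cons⟩
    obtain ⟨z, s⟩ := p
    simp only [mem_iff_olList_nolList, olList_mergeParts, nolList_mergeParts] at hp
    rcases hp with ⟨rfl, hp⟩ | ⟨rfl, hp⟩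
    · have hzx : z ≤ x := by
        rcases List.mem_cons.1 hp with rfl | hp
        exacts [le_rfl, (List.rel_of_pairwise_cons hc hp).le]
      cases b <;> simp_all [OverpartitionRel] <;> omega
    · have := List.rel_of_pairwise_cons hd hp
      simp [OverpartitionRel]; omega

lemma mergeParts_cons_left {x : ℕ} {c d : List ℕ}
    (h : ∀ y ∈ d.head?, OverpartitionRel b (x, true) (y, false)) :
    mergeParts b (x :: c) d = (x, true) :: mergeParts b c d := by
  cases d with
  | nil => rw [mergeParts]
  | cons y d => rw [mergeParts, if_pos (h y rfl)]

lemma mergeParts_cons_right {y : ℕ} {c d : List ℕ}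
    (h : ∀ x ∈ c.head?, ¬OverpartitionRel b (x, true) (y, false)) :
    mergeParts b c (y :: d) = (y, false) :: mergeParts b c d := by
  cases c with
  | nil => simp [mergeParts]
  | cons x c => rw [mergeParts, if_neg (h x rfl)]

lemma mergeParts_olList_nolList {l : List (ℕ × Bool)} (h : l.Pairwise (OverpartitionRel b)) :
    mergeParts b (olList l) (nolList l) = l := by
  induction l with
  | nil => simp [olList, nolList, mergeParts]
  | cons p l ih =>
    obtain ⟨hp, hl⟩ := List.pairwise_cons.1 h
    obtain ⟨x, _ | _⟩ := p
    · have hol : olList ((x, false) :: l) = olList l := by simp [olList]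
      have hnol : nolList ((x, false) :: l) = x :: nolList l := by simp [nolList]
      rw [hol, hnol, mergeParts_cons_right, ih hl]
      intro z hz
      have := hp (z, true) (mem_iff_olList_nolList.2 (Or.inl ⟨rfl, List.mem_of_mem_head? hz⟩))
      cases b <;> simp_all [OverpartitionRel] <;> omega
    · have hol : olList ((x, true) :: l) = x :: olList l := by simp [olList]
      have hnol : nolList ((x, true) :: l) = nolList l := by simp [nolList]
      rw [hol, hnol, mergeParts_cons_left, ih hl]
      exact fun y hy => hp (y, false)
        (mem_iff_olList_nolList.2 (Or.inr ⟨rfl, List.mem_of_mem_head? hy⟩))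

end

def addStaircase (s : ℕ) : List ℕ → List ℕ
  | [] => []
  | x :: l => (x + l.length + s) :: addStaircase s l

def subStaircase (s : ℕ) : List ℕ → List ℕ
  | [] => []
  | x :: l => (x - (l.length + s)) :: subStaircase s l

section

variable {s : ℕ}

@[simp] lemma length_addStaircase (l : List ℕ) : (addStaircase s l).length = l.length := by
  induction l <;> simp_all [addStaircase]

@[simp] lemma length_subStaircase (l : List ℕ) : (subStaircase s l).length = l.length := by
  induction l <;> simp_all [subStaircase]

lemma sum_addStaircase (l : List ℕ) :
    (addStaircase s l).sum = l.sum + l.length.choose 2 + s * l.length := by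
  induction l with
  | nil => simp [addStaircase]
  | cons x l ih =>
    simp only [addStaircase, List.sum_cons, ih, List.length_cons, Nat.choose_succ_succ',
      Nat.choose_one_right]
    ring

lemma isChain_addStaircase_iff {l : List ℕ} :
    (addStaircase s l).IsChain (· > ·) ↔ l.IsChain (· ≥ ·) := by
  induction l with
  | nil => simp [addStaircase]
  | cons x l ih =>
    cases l with
    | nil => simp [addStaircase]
    | cons y l =>
      simp only [addStaircase, List.isChain_cons_cons, List.length_cons] at ih ⊢
      rw [ih]
      exact and_congr_left fun _ => by omega

lemma pairwise_addStaircase_iff {l : List ℕ} :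
    (addStaircase s l).Pairwise (· > ·) ↔ l.Pairwise (· ≥ ·) := by
  rw [← List.isChain_iff_pairwise, ← List.isChain_iff_pairwise, isChain_addStaircase_iff]

lemma le_of_mem_addStaircase {l : List ℕ} {x : ℕ} (hx : x ∈ addStaircase s l) : s ≤ x := by
  induction l with
  | nil => simp [addStaircase] at hx
  | cons y l ih =>
    rcases List.mem_cons.1 hx with rfl | hx
    exacts [by omega, ih hx]

@[simp] lemma subStaircase_addStaircase (l : List ℕ) : subStaircase s (addStaircase s l) = l := by
  induction l with
  | nil => rfl
  | cons x l ih => simp [addStaircase, subStaircase, ih]; omega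

lemma length_add_le_of_pairwise_gt {l : List ℕ} {x : ℕ} (hl : l.Pairwise (· > ·))
    (hs : ∀ y ∈ l, s ≤ y ∧ y < x) (hx : s ≤ x) : l.length + s ≤ x := by
  have : l.toFinset ⊆ Finset.Ico s x := fun y hy => by
    simpa using hs y (List.mem_toFinset.1 hy)
  have hnd : l.Nodup := hl.imp ne_of_gt
  have := Finset.card_le_card this
  rw [List.toFinset_card_of_nodup hnd, Nat.card_Ico] at this
  omega

lemma addStaircase_subStaircase {l : List ℕ} (hl : l.Pairwise (· > ·)) (hs : ∀ x ∈ l, s ≤ x) :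
    addStaircase s (subStaircase s l) = l := by
  induction l with
  | nil => rfl
  | cons x l ih =>
    obtain ⟨hx, hl⟩ := List.pairwise_cons.1 hl
    have := length_add_le_of_pairwise_gt hl (fun y hy => ⟨hs y (by simp [hy]), hx y hy⟩)
      (hs x (by simp))
    simp only [subStaircase, addStaircase, length_subStaircase,
      ih hl fun y hy => hs y (by simp [hy])]
    congr 1
    omega

def staircaseEquiv (s m : ℕ) :
    {l : List ℕ // l.Pairwise (· ≥ ·) ∧ l.length = m} ≃
      {l : List ℕ // l.Pairwise (· > ·) ∧ l.length = m ∧ ∀ x ∈ l, s ≤ x} where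
  toFun l := ⟨addStaircase s l, pairwise_addStaircase_iff.2 l.2.1, by simp [l.2.2],
    fun _ => le_of_mem_addStaircase⟩
  invFun l := ⟨subStaircase s l,
    pairwise_addStaircase_iff.1 ((addStaircase_subStaircase l.2.1 l.2.2.2).symm ▸ l.2.1),
    by simp [l.2.2.1]⟩
  left_inv l := Subtype.ext (subStaircase_addStaircase l.1)
  right_inv l := Subtype.ext (addStaircase_subStaircase l.2.1 l.2.2.2)

lemma sum_staircaseEquiv {m : ℕ} (l : {l : List ℕ // l.Pairwise (· ≥ ·) ∧ l.length = m}) :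
    (staircaseEquiv s m l).1.sum = l.1.sum + m.choose 2 + s * m := by
  obtain ⟨l, -, rfl⟩ := l
  exact sum_addStaircase l

end

def distinctEquiv (m : ℕ) :
    {l : List ℕ // l.Pairwise (· > ·) ∧ l.length = m} ≃
      {l : List ℕ // l.Pairwise (· ≥ ·) ∧ l.length = m} :=
  ((staircaseEquiv 0 m).trans (Equiv.subtypeEquivRight fun _ => by simp)).symm

lemma sum_distinctEquiv {m : ℕ} (l : {l : List ℕ // l.Pairwise (· > ·) ∧ l.length = m}) :
    (distinctEquiv m l).1.sum + m.choose 2 = l.1.sum := by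
  obtain ⟨l, hl, rfl⟩ := l
  have := sum_addStaircase (s := 0) (subStaircase 0 l)
  rw [addStaircase_subStaircase hl (by simp)] at this
  simp [distinctEquiv, staircaseEquiv, this]

/-- The first `K` parts, zeros included, of the conjugate of the partition `l`. -/
def conj (K : ℕ) (l : List ℕ) : List ℕ :=
  (List.range K).map fun k => l.countP (k < ·)

@[simp] lemma length_conj (K : ℕ) (l : List ℕ) : (conj K l).length = K := by
  simp [conj]

lemma pairwise_conj (K : ℕ) (l : List ℕ) : (conj K l).Pairwise (· ≥ ·) := by
  rw [conj, List.pairwise_map]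
  exact List.pairwise_lt_range.imp fun hkk' =>
    List.countP_mono_left fun x _ h => by simp at h ⊢; omega

lemma le_length_of_mem_conj {K : ℕ} {l : List ℕ} {x : ℕ} (hx : x ∈ conj K l) : x ≤ l.length := by
  obtain ⟨k, -, rfl⟩ := List.mem_map.1 hx
  exact List.countP_le_length

lemma le_headD_of_mem {l : List ℕ} (hl : l.Pairwise (· ≥ ·)) {x : ℕ} (hx : x ∈ l) :
    x ≤ l.headD 0 := by
  cases l with
  | nil => simp at hx
  | cons y l =>
    rcases List.mem_cons.1 hx with rfl | hx
    exacts [le_rfl, List.rel_of_pairwise_cons hl hx]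

lemma one_le_of_mem_conj_headD {l : List ℕ} {x : ℕ} (hx : x ∈ conj (l.headD 0) l) : 1 ≤ x := by
  obtain ⟨k, hk, rfl⟩ := List.mem_map.1 hx
  cases l with
  | nil => simp at hk
  | cons y l => simp only [List.mem_range, List.headD_cons] at hk; simp [hk]

/-- In a decreasing list, the parts satisfying an upward closed predicate form a prefix. -/
lemma lt_countP_iff {l : List ℕ} (hl : l.Pairwise (· ≥ ·)) {p : ℕ → Bool}
    (hp : ∀ x y, x ≤ y → p x → p y) {i : ℕ} (hi : i < l.length) :
    i < l.countP p ↔ p l[i] := by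
  induction l generalizing i with
  | nil => simp at hi
  | cons x l ih =>
    obtain ⟨hx, hl⟩ := List.pairwise_cons.1 hl
    by_cases hpx : p x
    · cases i with
      | zero => simp [hpx]
      | succ i => simp [hpx, ← ih hl (by simpa using hi)]
    · have : l.countP p = 0 := List.countP_eq_zero.2 fun y hy hpy => hpx (hp y x (hx y hy) hpy)
      simp only [List.countP_cons, hpx, this]
      refine iff_of_false (by simp) fun hpi => hpx (hp _ x ?_ hpi)
      cases i with
      | zero => simp
      | succ i => exact hx _ (List.getElem_mem _)

lemma countP_range_lt (x K : ℕ) : (List.range K).countP (· < x) = min x K := by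
  induction K with
  | zero => simp
  | succ K ih => by_cases h : K < x <;> simp [List.range_succ, ih, h] <;> omega

lemma conj_conj {K : ℕ} {l : List ℕ} (hl : l.Pairwise (· ≥ ·)) (hK : ∀ x ∈ l, x ≤ K) :
    conj l.length (conj K l) = l := by
  refine List.ext_getElem (by simp) fun i hi _ => ?_
  have hil : i < l.length := by simpa using hi
  have : ∀ k, (i < l.countP (k < ·)) = (k < l[i]) := fun k =>
    propext (by simpa using lt_countP_iff hl (p := (k < ·)) (by simp; omega) hil)
  simp only [conj, List.getElem_map, List.getElem_range, List.countP_map, Function.comp_def,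
    this, countP_range_lt]
  exact min_eq_left (hK _ (List.getElem_mem _))

lemma sum_conj_cons (K x : ℕ) (l : List ℕ) : (conj K (x :: l)).sum = (conj K l).sum + min x K := by
  induction K with
  | zero => simp [conj]
  | succ K ih =>
    simp only [conj, List.range_succ, List.map_append, List.map_cons, List.map_nil,
      List.sum_append, List.sum_cons, List.sum_nil] at ih ⊢
    rw [ih, List.countP_cons]
    split_ifs with h <;> simp at h <;> omega

lemma sum_conj {K : ℕ} {l : List ℕ} (hK : ∀ x ∈ l, x ≤ K) : (conj K l).sum = l.sum := by
  induction l with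
  | nil => simp [conj]
  | cons x l ih =>
    rw [sum_conj_cons, ih fun y hy => hK y (by simp [hy]), min_eq_left (hK x (by simp)),
      List.sum_cons, add_comm]

lemma headD_conj {K : ℕ} {l : List ℕ} (hpos : ∀ x ∈ l, 1 ≤ x) (hK : ∀ x ∈ l, x ≤ K) :
    (conj K l).headD 0 = l.length := by
  cases K with
  | zero =>
    obtain rfl : l = [] := List.eq_nil_iff_forall_not_mem.2 fun x hx => by
      have := hpos x hx; have := hK x hx; omega
    rfl
  | succ K =>
    simp only [conj, List.range_succ_eq_map, List.map_cons, List.headD_cons]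
    exact List.countP_eq_length.2 fun x hx => by have := hpos x hx; simp; omega

def conjEquiv (N : ℕ) :
    {l : List ℕ // l.Pairwise (· ≥ ·) ∧ l.length = N} ≃
      {l : List ℕ // l.Pairwise (· ≥ ·) ∧ ∀ x ∈ l, 1 ≤ x ∧ x ≤ N} where
  toFun l := ⟨conj (l.1.headD 0) l, pairwise_conj _ _, fun _ hx =>
    ⟨one_le_of_mem_conj_headD hx, l.2.2 ▸ le_length_of_mem_conj hx⟩⟩
  invFun l := ⟨conj N l, pairwise_conj _ _, length_conj _ _⟩
  left_inv l := by
    obtain ⟨l, hl, rfl⟩ := l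
    exact Subtype.ext (conj_conj hl fun _ => le_headD_of_mem hl)
  right_inv l := by
    obtain ⟨l, hl, hN⟩ := l
    refine Subtype.ext (show conj ((conj N l).headD 0) (conj N l) = l from ?_)
    rw [headD_conj (fun x hx => (hN x hx).1) (fun x hx => (hN x hx).2),
      conj_conj hl fun x hx => (hN x hx).2]

lemma sum_conjEquiv {N : ℕ} (l : {l : List ℕ // l.Pairwise (· ≥ ·) ∧ l.length = N}) :
    (conjEquiv N l).1.sum = l.1.sum :=
  sum_conj fun _ => le_headD_of_mem l.2.1

def shiftEquiv (N j : ℕ) :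
    {l : List ℕ // l.Pairwise (· ≥ ·) ∧ l.length = j} ≃
      {l : List ℕ // l.Pairwise (· ≥ ·) ∧ l.length = j ∧ ∀ x ∈ l, N ≤ x} where
  toFun l := ⟨l.1.map (· + N), List.pairwise_map.2 (l.2.1.imp fun h => by omega),
    by simp [l.2.2], by simp⟩
  invFun l := ⟨l.1.map (· - N), List.pairwise_map.2 (l.2.1.imp fun h => by omega),
    by simp [l.2.2.1]⟩
  left_inv l := Subtype.ext (by simp [Function.comp_def])
  right_inv l := Subtype.ext <| by
    simpa [Function.comp_def] using
      List.map_congr_left fun x hx => Nat.sub_add_cancel (l.2.2.2 x hx)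

lemma sum_shiftEquiv {N j : ℕ} (l : {l : List ℕ // l.Pairwise (· ≥ ·) ∧ l.length = j}) :
    (shiftEquiv N j l).1.sum = l.1.sum + N * j := by
  obtain ⟨l, -, rfl⟩ := l
  simp [shiftEquiv, List.sum_map_add, mul_comm]

lemma genDurfeeSize_eq_iff {l : List (ℕ × Bool)} {N : ℕ} :
    genDurfeeSize l = N ↔ N ≤ (olList l).length + (nolList l).countP (N ≤ ·) ∧
      (olList l).length + (nolList l).countP (N + 1 ≤ ·) ≤ N := by
  have hlen := length_olList_add_length_nolList l
  have hmono : ∀ M, N + 1 ≤ M →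
      (nolList l).countP (M ≤ ·) ≤ (nolList l).countP (N + 1 ≤ ·) := fun M hM =>
    List.countP_mono_left fun x _ h => by simp at h ⊢; omega
  have hle := (nolList l).countP_le_length (p := (N ≤ ·))
  have hle' := (nolList l).countP_le_length (p := (N + 1 ≤ ·))
  simp only [genDurfeeSize, Nat.findGreatest_eq_iff, ← List.countP_eq_length_filter]
  constructor
  · rintro ⟨-, hN, hmax⟩
    refine ⟨by rcases N with _ | N; exacts [Nat.zero_le _, hN N.succ_ne_zero], ?_⟩
    by_cases h : N + 1 ≤ l.length
    · have := hmax (Nat.lt_add_one N) h; omega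
    · omega
  · rintro ⟨hN, hN'⟩
    exact ⟨by omega, fun _ => hN, fun M hM _ hPM => by have := hmono M hM; omega⟩

lemma countP_bounds_iff {μ : List ℕ} (hμ : μ.Pairwise (· ≥ ·)) {N j : ℕ} :
    j ≤ μ.countP (N ≤ ·) ∧ μ.countP (N + 1 ≤ ·) ≤ j ↔
      j ≤ μ.length ∧ (∀ x ∈ μ.take j, N ≤ x) ∧ ∀ x ∈ μ.drop j, x ≤ N := by
  constructor
  · rintro ⟨hge, hgt⟩
    have hj : j ≤ μ.length := hge.trans List.countP_le_length
    refine ⟨hj, fun x hx => ?_, fun x hx => ?_⟩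
    · obtain ⟨i, hi, rfl⟩ := List.getElem_of_mem hx
      simp only [List.length_take, lt_min_iff] at hi
      simpa using (lt_countP_iff hμ (p := (N ≤ ·)) (by simp; omega) hi.2).1 (by omega)
    · obtain ⟨i, hi, rfl⟩ := List.getElem_of_mem hx
      simp only [List.length_drop] at hi
      have := lt_countP_iff hμ (p := (N + 1 ≤ ·)) (by simp; omega) (i := j + i) (by omega)
      simp only [List.getElem_drop, decide_eq_true_eq] at this ⊢
      omega
  · rintro ⟨hj, htake, hdrop⟩
    have hsplit (p : ℕ → Bool) : μ.countP p = (μ.take j).countP p + (μ.drop j).countP p := by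
      rw [← List.countP_append, List.take_append_drop]
    have htake' : (μ.take j).countP (N ≤ ·) = j :=
      (List.countP_eq_length.2 (by simpa using htake)).trans (by simpa using hj)
    have hdrop' : (μ.drop j).countP (N + 1 ≤ ·) = 0 :=
      List.countP_eq_zero.2 fun x hx => by have := hdrop x hx; simp; omega
    have := (μ.take j).countP_le_length (p := (N + 1 ≤ ·))
    simp only [List.length_take] at this
    rw [hsplit, hsplit, htake', hdrop']
    omega

lemma genDurfeeSize_eq_iff_take_drop {l : List (ℕ × Bool)} (hμ : (nolList l).Pairwise (· ≥ ·))
    {N j : ℕ} (hj : j ≤ N) (hov : (olList l).length = N - j) :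
    genDurfeeSize l = N ↔ j ≤ (nolList l).length ∧
      (∀ x ∈ (nolList l).take j, N ≤ x) ∧ ∀ x ∈ (nolList l).drop j, x ≤ N := by
  rw [genDurfeeSize_eq_iff, ← countP_bounds_iff hμ, hov]
  omega

lemma isOverpartition_iff {l : List (ℕ × Bool)} :
    IsOverpartition l ↔ l.Pairwise (OverpartitionRel false) ∧
      (∀ x ∈ olList l, 1 ≤ x) ∧ ∀ x ∈ nolList l, 1 ≤ x := by
  rw [IsOverpartition, and_comm]
  refine and_congr (List.isChain_iff_pairwise (R := OverpartitionRel false)) ⟨?_, ?_⟩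
  · exact fun h => ⟨fun x hx => h (x, true) (mem_iff_olList_nolList.2 (Or.inl ⟨rfl, hx⟩)),
      fun x hx => h (x, false) (mem_iff_olList_nolList.2 (Or.inr ⟨rfl, hx⟩))⟩
  · rintro ⟨hol, hnol⟩ p hp
    rcases mem_iff_olList_nolList.1 hp with ⟨-, hp⟩ | ⟨-, hp⟩
    exacts [hol _ hp, hnol _ hp]

lemma pairwise_append_of_le {A β : List ℕ} {N : ℕ} (hA : A.Pairwise (· ≥ ·))
    (hβ : β.Pairwise (· ≥ ·)) (hAN : ∀ x ∈ A, N ≤ x) (hβN : ∀ x ∈ β, x ≤ N) :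
    (A ++ β).Pairwise (· ≥ ·) :=
  List.pairwise_append.2 ⟨hA, hβ, fun x hx y hy => (hβN y hy).trans (hAN x hx)⟩

def overpartitionEquiv (n : ℕ) {N j : ℕ} (hj : j ≤ N) :
    {l : List (ℕ × Bool) // IsOverpartition l ∧ opWeight l = n ∧ genDurfeeSize l = N ∧
        opOverlined l = N - j} ≃
      {u : {β : List ℕ // β.Pairwise (· ≥ ·) ∧ ∀ x ∈ β, 1 ≤ x ∧ x ≤ N} ×
          {A : List ℕ // A.Pairwise (· ≥ ·) ∧ A.length = j ∧ ∀ x ∈ A, N ≤ x} ×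
          {o : List ℕ // o.Pairwise (· > ·) ∧ o.length = N - j ∧ ∀ x ∈ o, 1 ≤ x} //
        u.1.1.sum + u.2.1.1.sum + u.2.2.1.sum = n} where
  toFun := fun ⟨l, hl, hw, hD, hov⟩ =>
    have hl := isOverpartition_iff.1 hl
    have hμ := pairwise_ge_nolList hl.1
    have hD := (genDurfeeSize_eq_iff_take_drop hμ hj (by rw [length_olList, hov])).1 hD
    ⟨(⟨(nolList l).drop j, hμ.sublist (List.drop_sublist _ _),
        fun x hx => ⟨hl.2.2 x (List.mem_of_mem_drop hx), hD.2.2 x hx⟩⟩,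
      ⟨(nolList l).take j, hμ.sublist (List.take_sublist _ _), by simpa using hD.1, hD.2.1⟩,
      ⟨olList l, pairwise_gt_olList hl.1, by rw [length_olList, hov], hl.2.1⟩),
     by
      rw [← hw, opWeight_eq_sum_olList_add_sum_nolList, ← List.sum_take_add_sum_drop (nolList l) j]
      ring⟩
  invFun := fun ⟨⟨⟨β, hβ, hβN⟩, ⟨A, hA, hAj, hAN⟩, ⟨o, ho, hoj, hopos⟩⟩, hw⟩ =>
    have hAβ := pairwise_append_of_le hA hβ hAN fun x hx => (hβN x hx).2
    have hApos (x : ℕ) (hx : x ∈ A) : 1 ≤ x :=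
      have : 0 < j := hAj ▸ List.length_pos_of_mem hx
      (show 1 ≤ N by omega).trans (hAN x hx)
    ⟨mergeParts false o (A ++ β), by
      refine ⟨isOverpartition_iff.2 ⟨pairwise_mergeParts ho hAβ, by simpa using hopos, ?_⟩,
        ?_, ?_, ?_⟩
      · simpa [or_imp, forall_and] using ⟨hApos, fun x hx => (hβN x hx).1⟩
      · rw [← hw, opWeight_eq_sum_olList_add_sum_nolList, olList_mergeParts, nolList_mergeParts,
          List.sum_append]
        ring
      · rw [genDurfeeSize_eq_iff_take_drop (by simpa using hAβ) hj (by simpa using hoj)]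
        simp only [nolList_mergeParts, List.take_left' hAj, List.drop_left' hAj]
        exact ⟨by simp [hAj], hAN, fun x hx => (hβN x hx).2⟩
      · rw [← length_olList, olList_mergeParts, hoj]⟩
  left_inv := by
    rintro ⟨l, hl, hw, hD, hov⟩
    apply Subtype.ext
    simp only [List.take_append_drop]
    exact mergeParts_olList_nolList (isOverpartition_iff.1 hl).1
  right_inv := by
    rintro ⟨⟨⟨β, hβ, hβN⟩, ⟨A, hA, hAj, hAN⟩, ⟨o, ho, hoj, hopos⟩⟩, hw⟩
    apply Subtype.ext
    simp [List.take_left' hAj, List.drop_left' hAj]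

lemma FrobSym.ext {F G : FrobSym} (htop : F.top = G.top) (hbot : F.bot = G.bot) : F = G := by
  cases F; cases G; cases htop; cases hbot; rfl

lemma FrobSym.pairwise_top (F : FrobSym) : F.top.Pairwise (· > ·) :=
  List.isChain_iff_pairwise.1 F.top_sorted

lemma FrobSym.pairwise_bot (F : FrobSym) : F.bot.Pairwise (OverpartitionRel true) :=
  List.isChain_iff_pairwise.1 F.bot_sorted

lemma FrobSym.length_olList_bot (F : FrobSym) : (olList F.bot).length = botOverlined F := by
  simp [olList, botOverlined]

lemma frobWeight_eq (F : FrobSym) :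
    frobWeight F = F.top.length + F.top.sum + (olList F.bot).sum + (nolList F.bot).sum := by
  rw [frobWeight, add_assoc _ (olList F.bot).sum, ← opWeight_eq_sum_olList_add_sum_nolList]
  rfl

def FrobSym.ofParts (a c d : List ℕ) (ha : a.Pairwise (· > ·)) (hc : c.Pairwise (· > ·))
    (hd : d.Pairwise (· ≥ ·)) (hlen : a.length = c.length + d.length) : FrobSym where
  top := a
  bot := mergeParts true c d
  top_sorted := (List.isChain_iff_pairwise (R := (· > ·))).2 ha
  bot_sorted :=
    (List.isChain_iff_pairwise (R := OverpartitionRel true)).2 (pairwise_mergeParts hc hd)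
  len_eq := by
    rw [hlen, ← length_olList_add_length_nolList, olList_mergeParts, nolList_mergeParts]

def frobeniusEquiv (n : ℕ) {N j : ℕ} (hj : j ≤ N) :
    {F : FrobSym // frobWeight F = n ∧ frobCols F = N ∧ botOverlined F = j} ≃
      {t : {a : List ℕ // a.Pairwise (· > ·) ∧ a.length = N} ×
          {c : List ℕ // c.Pairwise (· > ·) ∧ c.length = j} ×
          {d : List ℕ // d.Pairwise (· ≥ ·) ∧ d.length = N - j} //
        N + t.1.1.sum + t.2.1.1.sum + t.2.2.1.sum = n} where
  toFun := fun ⟨F, hw, hN, hov⟩ =>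
    have hlen := length_olList_add_length_nolList F.bot
    have hc := F.length_olList_bot
    have htop : F.top.length = N := hN
    ⟨(⟨F.top, F.pairwise_top, hN⟩,
      ⟨olList F.bot, pairwise_gt_olList F.pairwise_bot, hc.trans hov⟩,
      ⟨nolList F.bot, pairwise_ge_nolList F.pairwise_bot, by have := F.len_eq; omega⟩),
     by rw [frobWeight_eq, htop] at hw; exact hw⟩
  invFun := fun ⟨⟨⟨a, ha, haN⟩, ⟨c, hc, hcj⟩, ⟨d, hd, hdj⟩⟩, hw⟩ =>
    ⟨FrobSym.ofParts a c d ha hc hd (by omega),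
      by simp only at hw; rw [frobWeight_eq]; simpa [FrobSym.ofParts, haN] using hw, haN,
      by rw [← FrobSym.length_olList_bot]; simpa [FrobSym.ofParts] using hcj⟩
  left_inv := by
    rintro ⟨F, hw, hN, hov⟩
    exact Subtype.ext (FrobSym.ext rfl (mergeParts_olList_nolList F.pairwise_bot))
  right_inv := by
    rintro ⟨⟨⟨a, ha, haN⟩, ⟨c, hc, hcj⟩, ⟨d, hd, hdj⟩⟩, hw⟩
    apply Subtype.ext
    simp [FrobSym.ofParts]

lemma choose_two_add (j m : ℕ) : (j + m).choose 2 = j.choose 2 + j * m + m.choose 2 := by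
  induction m with
  | zero => simp
  | succ m ih =>
    rw [← add_assoc, Nat.choose_succ_succ', Nat.choose_one_right, ih, Nat.choose_succ_succ',
      Nat.choose_one_right]
    ring

lemma choose_two_sub_add {N j : ℕ} (hj : j ≤ N) :
    (N - j).choose 2 + (N - j) + N * j = N + N.choose 2 + j.choose 2 := by
  obtain ⟨m, rfl⟩ := Nat.exists_eq_add_of_le hj
  have hsq : j.choose 2 + j.choose 2 + j = j * j := by
    clear hj
    induction j with
    | zero => simp
    | succ j ih =>
      rw [Nat.choose_succ_succ', Nat.choose_one_right]
      norm_num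
      nlinarith
  rw [Nat.add_sub_cancel_left, choose_two_add]
  nlinarith

/-- **Proposition 2.2.** There is a bijection (hence equality of cardinalities)
between overpartitions of `n` whose Frobenius representation has `N` columns and `j`
overlined parts in the bottom row and overpartitions of `n` with generalized Durfee
square of size `N` and `N - j` overlined parts. -/
theorem frobenius_durfee (n N j : ℕ) (hj : j ≤ N) :
    Nat.card {F : FrobSym //
        frobWeight F = n ∧ frobCols F = N ∧ botOverlined F = j} =
      Nat.card {l : List (ℕ × Bool) //
        IsOverpartition l ∧ opWeight l = n ∧ genDurfeeSize l = N ∧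
          opOverlined l = N - j} := by
  let e := ((distinctEquiv N).trans (conjEquiv N)).prodCongr
    (((distinctEquiv j).trans (shiftEquiv N j)).prodCongr (staircaseEquiv 1 (N - j)))
  refine Nat.card_congr ((frobeniusEquiv n hj).trans
    ((e.subtypeEquiv fun t => ?_).trans (overpartitionEquiv n hj).symm))
  have hβ := sum_conjEquiv (distinctEquiv N t.1)
  have ha := sum_distinctEquiv t.1
  have hA := sum_shiftEquiv (N := N) (distinctEquiv j t.2.1)
  have hc := sum_distinctEquiv t.2.1
  have ho := sum_staircaseEquiv (s := 1) t.2.2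
  have := choose_two_sub_add hj
  simp only [e, Equiv.prodCongr_apply, Equiv.trans_apply, Prod.map]
  rw [hβ, hA, ho]
  omega

end Paper
end

section
/- Let Ē_{k,i}(N) = Σ_{n,j} Ē_{k,i}(n,j,N) a^j q^n, where Ē_{k,i}(n,j,N) is the number of paths with major index n, N peaks, and j South steps satisfying the special (k,i)-conditions, and for 0 ≤ i < k let Γ̄_{k,i}(N) be the generating function for paths obtained by deleting the first North-East step of a path counted in Ē_{k,i+1}(N) that begins with a North-East step. Then: Ē_{k,i}(0) = 1 for 1 ≤ i ≤ k; Ē_{k,i}(N) = q^N Ē_{k,i+1}(N) + q^N Γ̄_{k,i−1}(N) for 1 ≤ i < k; Γ̄_{k,i}(N) = q^N Γ̄_{k,i−1}(N) + (a + q^{N−1}) Ē_{k,i+1}(N−1) for 0 < i < k and N ≥ 1; Ē_{k,k}(N) = (q^N/(1 − q^N)) Γ̄_{k,k−1}(N) for N ≥ 1; and Γ̄_{k,0}(N) = 0. -/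
/-!
Removing the first step of a path is injective. When that step has width one it lowers the major
index by the number of peaks of the path (every peak moves one unit to the left, and a peak at the
first vertex sat at `x = 1`); when it is a South step it lowers the number of South steps by one.
Splitting each set of paths by its first step (for `Γ̄`, by the step after the deleted North-East
step) therefore writes it as a disjoint union of such images, and its generating function as a sum
of monomial multiples of generating functions. `Ē_{k,k}(N)` reappears on the right-hand side
(paths beginning with an East step), so that recurrence is solved for it in the power series ring.
Additivity needs the fibres of the weight to be finite, which holds because a valid path starting
at height `h` has at most `2 · maj + h` steps.
-/

namespace Paper

/-- The four kinds of unitary steps. -/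
inductive PStep : Type
  | NE | SE | S | E
  deriving DecidableEq, BEq, Repr

/-- Horizontal displacement of a step. -/
def stepDx : PStep → ℕ
  | .S => 0
  | _ => 1

/-- Vertical displacement of a step. -/
def stepDy : PStep → ℤ
  | .NE => 1
  | .SE => -1
  | .S => -1
  | .E => 0

/-- Height (`y`-coordinate) after performing the steps of `l`, starting at height `h`. -/
def pathHeight (h : ℕ) (l : List PStep) : ℤ := (h : ℤ) + (l.map stepDy).sum

/-- `x`-coordinate after performing the steps of `l`, starting on the `y`-axis. -/
def pathX (l : List PStep) : ℕ := (l.map stepDx).sum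

/-- A valid path: stays in the first quadrant, starts at `(0,h)` on the `y`-axis, ends
on the `x`-axis, South steps only appear directly after a North-East step, East steps
only appear at height `0`, and the path is empty or ends with a South-East or South step. -/
def ValidPath (h : ℕ) (l : List PStep) : Prop :=
  (∀ m : ℕ, 0 ≤ pathHeight h (l.take m)) ∧
  (∀ m : ℕ, l[m]? = some PStep.S → ∃ m', m = m' + 1 ∧ l[m']? = some PStep.NE) ∧
  (∀ m : ℕ, l[m]? = some PStep.E → pathHeight h (l.take m) = 0) ∧
  pathHeight h l = 0 ∧
  (l = [] ∨ l.getLast? = some PStep.SE ∨ l.getLast? = some PStep.S)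

/-- The vertex reached after step `m` is a peak: it is preceded by a North-East step and
followed by a South-East step (NESE peak) or a South step (NES peak). -/
def IsPeak (l : List PStep) (m : ℕ) : Prop :=
  l[m]? = some PStep.NE ∧ (l[m+1]? = some PStep.SE ∨ l[m+1]? = some PStep.S)

instance (l : List PStep) (m : ℕ) : Decidable (IsPeak l m) := by
  unfold IsPeak; infer_instance

/-- The major index of a path: the sum of the `x`-coordinates of its peaks. -/
def majorIndex (l : List PStep) : ℕ :=
  ∑ m ∈ Finset.range l.length, if IsPeak l m then pathX (l.take (m + 1)) else 0

/-- The number of peaks of a path. -/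
def numPeaks (l : List PStep) : ℕ :=
  ((Finset.range l.length).filter fun m => IsPeak l m).card

/-- The number of South steps of a path. -/
def southSteps (l : List PStep) : ℕ := l.count PStep.S

/-- A path satisfies the special `(k,i)`-conditions if it is a valid path starting at
height `k - i` whose height always stays below `k`. -/
def SpecialPath (k i : ℕ) (l : List PStep) : Prop :=
  ValidPath (k - i) l ∧ ∀ m : ℕ, pathHeight (k - i) (l.take m) < k

/-- `Ebar k i n j` is the number of paths with major index `n` and `j` South steps
satisfying the special `(k,i)`-conditions. -/
noncomputable def Ebar (k i n j : ℕ) : ℕ :=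
  Nat.card {l : List PStep // SpecialPath k i l ∧ majorIndex l = n ∧ southSteps l = j}


/-- `EgfP k i N` : the generating function (a formal power series in `q = X 0` and
`a = X 1`) for paths with `N` peaks satisfying the special `(k,i)`-conditions, where
the exponent of `q` records the major index and the exponent of `a` the number of
South steps. -/
noncomputable def EgfP (k i N : ℕ) : MvPowerSeries (Fin 2) ℚ :=
  fun d => (Nat.card {l : List PStep // SpecialPath k i l ∧ numPeaks l = N ∧
    majorIndex l = d 0 ∧ southSteps l = d 1} : ℚ)

/-- `GgfP k i N` : the generating function for the paths obtained by deleting the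
first North-East step of a path counted in `EgfP k (i+1) N` that begins with a
North-East step.  (Deleting the initial North-East step decreases the major index by
`N` and leaves the number of peaks and of South steps unchanged.) -/
noncomputable def GgfP (k i N : ℕ) : MvPowerSeries (Fin 2) ℚ :=
  fun d => (Nat.card {l : List PStep // SpecialPath k (i + 1) l ∧ numPeaks l = N ∧
    l.head? = some PStep.NE ∧ majorIndex l = d 0 + N ∧ southSteps l = d 1} : ℚ)


namespace PStep

instance : Fintype PStep :=
  ⟨{NE, SE, S, E}, fun s => by cases s <;> decide⟩

end PStep

open PStep

section Height

variable {h h' : ℕ} {s : PStep} {l : List PStep}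

lemma pathHeight_cons (hh : (h : ℤ) + stepDy s = h') : pathHeight h (s :: l) = pathHeight h' l := by
  simp only [pathHeight, List.map_cons, List.sum_cons, ← hh]
  ring

lemma pathHeight_take_succ_cons (hh : (h : ℤ) + stepDy s = h') (m : ℕ) :
    pathHeight h ((s :: l).take (m + 1)) = pathHeight h' (l.take m) := by
  rw [List.take_succ_cons, pathHeight_cons hh]

lemma forall_pathHeight_take_cons (P : Option PStep → ℤ → Prop) (hh : (h : ℤ) + stepDy s = h') :
    (∀ m, P (s :: l)[m]? (pathHeight h ((s :: l).take m))) ↔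
      P (some s) h ∧ ∀ m, P l[m]? (pathHeight h' (l.take m)) := by
  constructor
  · intro H
    refine ⟨by simpa [pathHeight] using H 0, fun m => ?_⟩
    have := H (m + 1)
    rwa [pathHeight_take_succ_cons hh] at this
  · rintro ⟨H0, H⟩ (_ | m)
    · simpa [pathHeight] using H0
    · rw [pathHeight_take_succ_cons hh]
      exact H m

end Height

section Valid

variable {h h' : ℕ} {s : PStep} {l t : List PStep}

lemma forall_S_preceded_by_NE_cons (hS : s ≠ S) (hNES : s = NE → l.head? ≠ some S) :
    (∀ m, (s :: l)[m]? = some S → ∃ m', m = m' + 1 ∧ (s :: l)[m']? = some NE) ↔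
      ∀ m, l[m]? = some S → ∃ m', m = m' + 1 ∧ l[m']? = some NE := by
  constructor
  · intro H m hm
    obtain ⟨m', hm', hNE⟩ := H (m + 1) (by simpa using hm)
    obtain rfl : m = m' := by omega
    rcases m with _ | m
    · cases l <;> simp_all
    · exact ⟨m, rfl, by simpa using hNE⟩
  · rintro H (_ | m) hm
    · exact absurd (by simpa using hm) hS
    · obtain ⟨m', rfl, hNE⟩ := H m (by simpa using hm)
      exact ⟨m' + 1, rfl, by simpa using hNE⟩

lemma validPath_cons (hh : (h : ℤ) + stepDy s = h') (hS : s ≠ S) (hE : s = E → h = 0)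
    (hNES : s = NE → l.head? ≠ some S) :
    ValidPath h (s :: l) ↔ ValidPath h' l ∧ (l = [] → s = SE) := by
  have ha := forall_pathHeight_take_cons (l := l) (fun _ z => 0 ≤ z) hh
  have hc := forall_pathHeight_take_cons (l := l) (fun o z => o = some E → z = 0) hh
  have he : ((s :: l) = [] ∨ (s :: l).getLast? = some SE ∨ (s :: l).getLast? = some S) ↔
      (l = [] ∨ l.getLast? = some SE ∨ l.getLast? = some S) ∧ (l = [] → s = SE) := by
    cases l <;> simp [hS]
  simp only [ValidPath, ha, hc, forall_S_preceded_by_NE_cons hS hNES, pathHeight_cons hh, he]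
  simp only [Option.some.injEq, Int.natCast_nonneg, true_and]
  constructor
  · rintro ⟨ha, hb, ⟨-, hc⟩, hd, he, hse⟩
    exact ⟨⟨ha, hb, hc, hd, he⟩, hse⟩
  · rintro ⟨⟨ha, hb, hc, hd, he⟩, hse⟩
    exact ⟨ha, hb, ⟨fun hs => by simp [hE hs], hc⟩, hd, he, hse⟩

lemma validPath_nil : ValidPath h [] ↔ h = 0 := by
  simp [ValidPath, pathHeight]

lemma not_validPath_S_cons : ¬ ValidPath h (S :: t) := fun hv => by
  obtain ⟨_, h0, -⟩ := hv.2.1 0 rfl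
  omega

lemma validPath_SE_cons : ValidPath h (SE :: t) ↔ 0 < h ∧ ValidPath (h - 1) t := by
  rcases h with _ | h
  · simp only [lt_irrefl, false_and, iff_false]
    intro hv
    simpa [pathHeight, stepDy] using hv.1 1
  · rw [validPath_cons (h' := h) (by simp [stepDy]) (by decide) (by simp) (by simp)]
    simp

lemma validPath_E_cons : ValidPath h (E :: t) ↔ h = 0 ∧ ValidPath 0 t ∧ t ≠ [] := by
  by_cases h0 : h = 0
  · subst h0
    rw [validPath_cons (h' := 0) (by simp [stepDy]) (by decide) (fun _ => rfl) (by simp)]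
    simp
  · simp only [h0, false_and, iff_false]
    exact fun hv => h0 (by simpa [pathHeight] using hv.2.2.1 0 rfl)

lemma validPath_NE_cons (ht : t.head? ≠ some S) :
    ValidPath h (NE :: t) ↔ ValidPath (h + 1) t ∧ t ≠ [] := by
  rw [validPath_cons (h' := h + 1) (by simp [stepDy]) (by decide) (by simp) (fun _ => ht)]
  simp

lemma validPath_NE_S_cons : ValidPath h (NE :: S :: t) ↔ ValidPath h t := by
  have hh1 : (h : ℤ) + stepDy NE = ((h + 1 : ℕ) : ℤ) := by simp [stepDy]
  have hh2 : ((h + 1 : ℕ) : ℤ) + stepDy S = h := by simp [stepDy]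
  have ha := forall_pathHeight_take_cons (l := S :: t) (fun _ z => 0 ≤ z) hh1
  have ha' := forall_pathHeight_take_cons (l := t) (fun _ z => 0 ≤ z) hh2
  have hc := forall_pathHeight_take_cons (l := S :: t) (fun o z => o = some E → z = 0) hh1
  have hc' := forall_pathHeight_take_cons (l := t) (fun o z => o = some E → z = 0) hh2
  have hb : (∀ m, (NE :: S :: t)[m]? = some S → ∃ m', m = m' + 1 ∧ (NE :: S :: t)[m']? = some NE) ↔
      ∀ m, t[m]? = some S → ∃ m', m = m' + 1 ∧ t[m']? = some NE := by
    constructor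
    · intro H m hm
      obtain ⟨m', hm', hNE⟩ := H (m + 2) (by simpa using hm)
      obtain rfl : m + 1 = m' := by omega
      rcases m with _ | m
      · simp at hNE
      · exact ⟨m, rfl, by simpa using hNE⟩
    · rintro H (_ | _ | m) hm
      · simp at hm
      · exact ⟨0, rfl, rfl⟩
      · obtain ⟨m', rfl, hNE⟩ := H m (by simpa using hm)
        exact ⟨m' + 2, rfl, by simpa using hNE⟩
  have he : ((NE :: S :: t) = [] ∨ (NE :: S :: t).getLast? = some SE ∨
      (NE :: S :: t).getLast? = some S) ↔
      (t = [] ∨ t.getLast? = some SE ∨ t.getLast? = some S) := by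
    cases t <;> simp
  simp only [ValidPath, ha, ha', hc, hc', hb, pathHeight_cons hh1, pathHeight_cons hh2, he]
  simp only [Option.some.injEq, Int.natCast_nonneg, true_and, reduceCtorEq, IsEmpty.forall_iff]

end Valid

section Special
variable {k i : ℕ} {t : List PStep}

lemma forall_pathHeight_lt_cons {h h' : ℕ} {s : PStep} (hh : (h : ℤ) + stepDy s = h') :
    (∀ m, pathHeight h ((s :: t).take m) < k) ↔ h < k ∧ ∀ m, pathHeight h' (t.take m) < k := by
  rw [forall_pathHeight_take_cons (fun _ z => z < k) hh, Nat.cast_lt]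

lemma specialPath_SE_cons (hi : 0 < i) (hik : i < k) :
    SpecialPath k i (SE :: t) ↔ SpecialPath k (i + 1) t := by
  have hh : ((k - i : ℕ) : ℤ) + stepDy SE = (k - (i + 1) : ℕ) := by simp [stepDy]; omega
  simp only [SpecialPath, validPath_SE_cons, forall_pathHeight_lt_cons hh,
    show k - i - 1 = k - (i + 1) by omega]
  simp [show 0 < k - i by omega, show k - i < k by omega]

lemma specialPath_E_cons (hk : 0 < k) : SpecialPath k k (E :: t) ↔ SpecialPath k k t ∧ t ≠ [] := by
  have hh : ((0 : ℕ) : ℤ) + stepDy E = (0 : ℕ) := by simp [stepDy]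
  simp only [SpecialPath, Nat.sub_self, validPath_E_cons, forall_pathHeight_lt_cons hh]
  simp only [hk, true_and]
  tauto

lemma specialPath_NE_cons (hik : i < k) (ht : t.head? ≠ some S) :
    SpecialPath k (i + 1) (NE :: t) ↔ SpecialPath k i t ∧ t ≠ [] := by
  have hh : ((k - (i + 1) : ℕ) : ℤ) + stepDy NE = (k - i : ℕ) := by simp [stepDy]; omega
  simp only [SpecialPath, validPath_NE_cons ht, forall_pathHeight_lt_cons hh,
    show k - (i + 1) + 1 = k - i by omega]
  simp only [show k - (i + 1) < k by omega, true_and]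
  tauto

lemma specialPath_NE_S_cons (hi : 1 < i) (hik : i ≤ k) :
    SpecialPath k i (NE :: S :: t) ↔ SpecialPath k i t := by
  have hh1 : ((k - i : ℕ) : ℤ) + stepDy NE = (k - i + 1 : ℕ) := by simp [stepDy]
  have hh2 : ((k - i + 1 : ℕ) : ℤ) + stepDy S = (k - i : ℕ) := by simp [stepDy]
  simp only [SpecialPath, validPath_NE_S_cons, forall_pathHeight_lt_cons hh1,
    forall_pathHeight_lt_cons hh2]
  simp [show k - i + 1 < k by omega, show k - i < k by omega]

end Special

section Peaks
variable {s : PStep} {l : List PStep}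

lemma isPeak_cons_succ (m : ℕ) : IsPeak (s :: l) (m + 1) ↔ IsPeak l m := by
  simp [IsPeak]

lemma isPeak_cons_zero : IsPeak (s :: l) 0 ↔ s = NE ∧ (l.head? = some SE ∨ l.head? = some S) := by
  cases l <;> simp [IsPeak]

lemma numPeaks_eq_sum (l : List PStep) :
    numPeaks l = ∑ m ∈ Finset.range l.length, if IsPeak l m then 1 else 0 := by
  rw [numPeaks, Finset.card_filter]

lemma numPeaks_cons : numPeaks (s :: l) = numPeaks l + if IsPeak (s :: l) 0 then 1 else 0 := by
  simp only [numPeaks_eq_sum, List.length_cons, Finset.sum_range_succ', isPeak_cons_succ]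

lemma numPeaks_cons_of_ne_NE (hs : s ≠ NE) : numPeaks (s :: l) = numPeaks l := by
  simp [numPeaks_cons, isPeak_cons_zero, hs]

lemma numPeaks_NE_NE_cons : numPeaks (NE :: NE :: l) = numPeaks (NE :: l) := by
  simp [numPeaks_cons (s := NE) (l := NE :: l), isPeak_cons_zero]

lemma numPeaks_NE_cons_cons (hs : s = SE ∨ s = S) : numPeaks (NE :: s :: l) = numPeaks l + 1 := by
  have : s ≠ NE := by rintro rfl; simp at hs
  simp [numPeaks_cons (s := NE), isPeak_cons_zero, hs, numPeaks_cons_of_ne_NE this]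

/-- Prepending a step moves every peak `stepDx s` to the right; a new peak at the first vertex
has `x`-coordinate `1 = stepDx NE`. -/
lemma majorIndex_cons : majorIndex (s :: l) = stepDx s * numPeaks (s :: l) + majorIndex l := by
  have hx : ∀ m, pathX ((s :: l).take (m + 1)) = stepDx s + pathX (l.take m) := fun m => by
    simp [pathX]
  have hite : ∀ (p : Prop) [Decidable p] (b : ℕ),
      (if p then stepDx s + b else 0) = stepDx s * (if p then 1 else 0) + if p then b else 0 :=
    fun p _ b => by split_ifs <;> simp
  simp only [majorIndex, numPeaks_eq_sum, List.length_cons, Finset.sum_range_succ', hx,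
    isPeak_cons_succ, hite, Finset.sum_add_distrib, List.take_zero]
  simp only [pathX, List.map_nil, List.sum_nil, ite_self, mul_add, Finset.mul_sum]
  ring

lemma majorIndex_cons_of_ne_S (hs : s ≠ S) :
    majorIndex (s :: l) = numPeaks (s :: l) + majorIndex l := by
  rw [majorIndex_cons, show stepDx s = 1 by cases s <;> simp_all [stepDx], one_mul]

lemma majorIndex_S_cons : majorIndex (S :: l) = majorIndex l := by
  simp [majorIndex_cons, stepDx]

lemma southSteps_cons : southSteps (s :: l) = southSteps l + if s = S then 1 else 0 := by
  cases s <;> simp [southSteps, List.count_cons] <;> rfl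

end Peaks

section Shape

lemma ValidPath.eq_replicate_of_numPeaks_eq_zero {h : ℕ} {l : List PStep} (hv : ValidPath h l)
    (hp : numPeaks l = 0) : l = List.replicate h SE := by
  induction l generalizing h with
  | nil => simp [validPath_nil.1 hv]
  | cons s t ih =>
    cases s with
    | S => exact absurd hv not_validPath_S_cons
    | SE =>
      obtain ⟨hh, hvt⟩ := validPath_SE_cons.1 hv
      rw [ih hvt (by rwa [numPeaks_cons_of_ne_NE (by decide)] at hp)]
      obtain ⟨h, rfl⟩ := Nat.exists_eq_add_one_of_ne_zero hh.ne'
      rfl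
    | E =>
      obtain ⟨rfl, hvt, hne⟩ := validPath_E_cons.1 hv
      exact absurd (ih hvt (by rwa [numPeaks_cons_of_ne_NE (by decide)] at hp)) hne
    | NE =>
      have hnp : ¬ IsPeak (NE :: t) 0 := fun hpk => by simp [numPeaks_cons, hpk] at hp
      have ht : t.head? ≠ some S := fun ht => hnp (isPeak_cons_zero.2 ⟨rfl, Or.inr ht⟩)
      obtain ⟨hvt, -⟩ := (validPath_NE_cons ht).1 hv
      have := ih hvt (by simpa [numPeaks_cons, hnp] using hp)
      exact absurd (isPeak_cons_zero.2 ⟨rfl, Or.inl (by simp [this, List.replicate_succ])⟩) hnp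

lemma ValidPath.numPeaks_pos {h : ℕ} {s : PStep} {t : List PStep} (hv : ValidPath h (s :: t))
    (hs : s ≠ SE) : 0 < numPeaks (s :: t) := by
  refine Nat.pos_of_ne_zero fun hp => hs ?_
  have := hv.eq_replicate_of_numPeaks_eq_zero hp
  rcases h with _ | h <;> simp_all [List.replicate_succ]

lemma ValidPath.length_le {h : ℕ} {l : List PStep} (hv : ValidPath h l) :
    l.length ≤ 2 * majorIndex l + h := by
  induction hn : l.length using Nat.strong_induction_on generalizing l h with
  | _ n ih =>
  subst hn
  rcases l with _ | ⟨s, t⟩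
  · simp
  cases s with
  | S => exact absurd hv not_validPath_S_cons
  | SE =>
    obtain ⟨hh, hvt⟩ := validPath_SE_cons.1 hv
    have := ih _ (by simp) hvt rfl
    rw [List.length_cons, majorIndex_cons_of_ne_S (by decide)]
    omega
  | E =>
    obtain ⟨rfl, hvt, -⟩ := validPath_E_cons.1 hv
    have := ih _ (by simp) hvt rfl
    have := hv.numPeaks_pos (by decide)
    rw [List.length_cons, majorIndex_cons_of_ne_S (by decide)]
    omega
  | NE =>
    have := hv.numPeaks_pos (by decide)
    rw [majorIndex_cons_of_ne_S (by decide)]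
    by_cases ht : t.head? = some S
    · obtain ⟨u, rfl⟩ : ∃ u, t = S :: u := by
        rcases t with _ | ⟨a, u⟩ <;> simp_all
      have := ih _ (by simp) (validPath_NE_S_cons.1 hv) rfl
      rw [majorIndex_S_cons, List.length_cons, List.length_cons]
      omega
    · have := ih _ (by simp) ((validPath_NE_cons ht).1 hv).1 rfl
      rw [List.length_cons]
      omega

end Shape

section GenFun

open MvPowerSeries

variable {α β σ : Type*} {R : Type*} [Semiring R]

variable (R) in
/-- Only meaningful when the fibres of `w` on `A` are finite: `Set.ncard` of an infinite set
is `0`. -/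
noncomputable def genFun (w : α → σ →₀ ℕ) (A : Set α) : MvPowerSeries σ R :=
  fun d => ({x ∈ A | w x = d}.ncard : R)

lemma coeff_genFun (w : α → σ →₀ ℕ) (A : Set α) (d : σ →₀ ℕ) :
    coeff d (genFun R w A) = ({x ∈ A | w x = d}.ncard : R) :=
  rfl

lemma genFun_empty (w : α → σ →₀ ℕ) : genFun R w ∅ = 0 := by
  ext d
  simp [coeff_genFun]

lemma genFun_singleton (w : α → σ →₀ ℕ) (x : α) : genFun R w {x} = monomial (w x) 1 := by
  classical
  ext d
  rw [coeff_genFun, coeff_monomial]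
  split_ifs with hd
  · rw [Set.sep_eq_self_iff_mem_true.2 (by simp [hd])]
    simp
  · rw [Set.sep_eq_empty_iff_mem_false.2 (by simp [Ne.symm hd])]
    simp

lemma genFun_union {w : α → σ →₀ ℕ} {A B : Set α} (hAB : Disjoint A B)
    (hfin : ∀ d, {x ∈ A ∪ B | w x = d}.Finite) :
    genFun R w (A ∪ B) = genFun R w A + genFun R w B := by
  ext d
  have hA : {x ∈ A | w x = d}.Finite := (hfin d).subset fun _ hx => ⟨Or.inl hx.1, hx.2⟩
  have hB : {x ∈ B | w x = d}.Finite := (hfin d).subset fun _ hx => ⟨Or.inr hx.1, hx.2⟩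
  have hsep : {x ∈ A ∪ B | w x = d} = {x ∈ A | w x = d} ∪ {x ∈ B | w x = d} := Set.sep_union
  rw [map_add, coeff_genFun, coeff_genFun, coeff_genFun, hsep,
    Set.ncard_union_eq (hAB.mono (Set.sep_subset _ _) (Set.sep_subset _ _)) hA hB, Nat.cast_add]

lemma genFun_image {w : α → σ →₀ ℕ} {w' : β → σ →₀ ℕ} {f : α → β} {A : Set α}
    (hf : Set.InjOn f A) (e : σ →₀ ℕ) (he : ∀ x ∈ A, w' (f x) = e + w x) :
    genFun R w' (f '' A) = monomial e 1 * genFun R w A := by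
  ext d
  rw [coeff_monomial_mul, coeff_genFun, coeff_genFun, one_mul]
  split_ifs with hed
  · have : {y ∈ f '' A | w' y = d} = f '' {x ∈ A | w x = d - e} := by
      ext y
      simp only [Set.mem_image]
      constructor
      · rintro ⟨⟨x, hx, rfl⟩, hxd⟩
        exact ⟨x, ⟨hx, by rw [← hxd, he x hx, add_tsub_cancel_left]⟩, rfl⟩
      · rintro ⟨x, ⟨hx, hxd⟩, rfl⟩
        exact ⟨⟨x, hx, rfl⟩, by rw [he x hx, hxd, add_tsub_cancel_of_le hed]⟩
    rw [this, (hf.mono (Set.sep_subset _ _)).ncard_image]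
  · rw [Set.sep_eq_empty_iff_mem_false.2 ?_, Set.ncard_empty, Nat.cast_zero]
    rintro _ ⟨x, hx, rfl⟩ hxd
    exact hed (hxd ▸ he x hx ▸ le_self_add)

end GenFun

section PathSeries

open Finsupp

variable {k i N : ℕ} {s : PStep} {l : List PStep}

noncomputable def pathWeight (l : List PStep) : Fin 2 →₀ ℕ :=
  single 0 (majorIndex l) + single 1 (southSteps l)

lemma pathWeight_eq_iff {d : Fin 2 →₀ ℕ} :
    pathWeight l = d ↔ majorIndex l = d 0 ∧ southSteps l = d 1 := by
  constructor
  · rintro rfl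
    simp [pathWeight]
  · rintro ⟨h0, h1⟩
    ext j
    fin_cases j <;> simp [pathWeight, h0, h1]

lemma pathWeight_cons_of_ne_S (hs : s ≠ S) :
    pathWeight (s :: l) = single 0 (numPeaks (s :: l)) + pathWeight l := by
  simp only [pathWeight, majorIndex_cons_of_ne_S hs, southSteps_cons, hs, if_false, add_zero,
    single_add]
  abel

lemma pathWeight_S_cons : pathWeight (S :: l) = single 1 1 + pathWeight l := by
  simp only [pathWeight, majorIndex_S_cons, southSteps_cons, if_true, single_add]
  abel

def specialPaths (k i N : ℕ) : Set (List PStep) := {l | SpecialPath k i l ∧ numPeaks l = N}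

def neTails (k i N : ℕ) : Set (List PStep) := {t | NE :: t ∈ specialPaths k (i + 1) N}

@[simp] lemma mem_specialPaths : l ∈ specialPaths k i N ↔ SpecialPath k i l ∧ numPeaks l = N :=
  Iff.rfl

@[simp] lemma mem_neTails :
    l ∈ neTails k i N ↔ SpecialPath k (i + 1) (NE :: l) ∧ numPeaks (NE :: l) = N :=
  Iff.rfl

lemma EgfP_eq_genFun : EgfP k i N = genFun ℚ pathWeight (specialPaths k i N) := by
  ext d
  rw [coeff_genFun, MvPowerSeries.coeff_apply, ← Nat.card_coe_set_eq]
  exact congrArg Nat.cast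
    (Nat.card_congr (Equiv.subtypeEquivRight fun l => by simp [pathWeight_eq_iff, and_assoc]))

lemma GgfP_eq_genFun : GgfP k i N = genFun ℚ pathWeight (neTails k i N) := by
  ext d
  rw [coeff_genFun, MvPowerSeries.coeff_apply, ← List.cons_injective.injOn.ncard_image,
    ← Nat.card_coe_set_eq]
  refine congrArg Nat.cast (Nat.card_congr (Equiv.subtypeEquivRight fun l => ?_))
  rcases l with _ | ⟨s, t⟩
  · simp
  · simp only [Set.mem_image, Set.mem_ofPred_eq, mem_neTails, List.cons.injEq, List.head?_cons,
      Option.some.injEq, pathWeight_eq_iff]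
    constructor
    · rintro ⟨hsp, hN, rfl, hmaj, hS⟩
      rw [majorIndex_cons_of_ne_S (by decide), hN] at hmaj
      exact ⟨t, ⟨⟨hsp, hN⟩, by omega, by simpa [southSteps_cons] using hS⟩, rfl, rfl⟩
    · rintro ⟨t, ⟨⟨hsp, hN⟩, hmaj, hS⟩, rfl, rfl⟩
      refine ⟨hsp, hN, rfl, ?_, by simpa [southSteps_cons] using hS⟩
      rw [majorIndex_cons_of_ne_S (by decide), hN, hmaj, add_comm]

lemma genFun_image_cons {s : PStep} {A : Set (List PStep)} {n : ℕ} (hs : s ≠ S)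
    (hA : ∀ t ∈ A, numPeaks (s :: t) = n) :
    genFun ℚ pathWeight ((s :: ·) '' A) = MvPowerSeries.X 0 ^ n * genFun ℚ pathWeight A := by
  rw [MvPowerSeries.X_pow_eq]
  exact genFun_image List.cons_injective.injOn _ fun t ht => by
    rw [pathWeight_cons_of_ne_S hs, hA t ht]

lemma genFun_image_S_cons (A : Set (List PStep)) :
    genFun ℚ pathWeight ((S :: ·) '' A) = MvPowerSeries.X 1 * genFun ℚ pathWeight A := by
  rw [MvPowerSeries.X_def]
  exact genFun_image List.cons_injective.injOn _ fun _ _ => pathWeight_S_cons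

lemma finite_specialPaths_fibre (d : Fin 2 →₀ ℕ) :
    {l ∈ specialPaths k i N | pathWeight l = d}.Finite := by
  refine (List.finite_length_le PStep (2 * d 0 + k)).subset fun l ⟨⟨hsp, _⟩, hd⟩ => ?_
  have := hsp.1.length_le
  rw [pathWeight_eq_iff] at hd
  simp only [Set.mem_ofPred_eq]
  omega

lemma finite_neTails_fibre (d : Fin 2 →₀ ℕ) :
    {t ∈ neTails k i N | pathWeight t = d}.Finite := by
  refine (List.finite_length_le PStep (2 * (d 0 + N) + k)).subset fun t ⟨⟨hsp, hN⟩, hd⟩ => ?_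
  have := hsp.1.length_le
  rw [List.length_cons, majorIndex_cons_of_ne_S (by decide), hN] at this
  rw [pathWeight_eq_iff] at hd
  simp only [Set.mem_ofPred_eq]
  omega

end PathSeries

section Decomposition

variable {k i N : ℕ}

lemma disjoint_image_cons {s s' : PStep} (h : s ≠ s') (A B : Set (List PStep)) :
    Disjoint ((s :: ·) '' A) ((s' :: ·) '' B) :=
  Set.disjoint_left.2 fun _ ⟨_, _, hl⟩ ⟨_, _, hl'⟩ => h (List.cons.inj (hl.trans hl'.symm)).1

lemma specialPath_replicate (hi : 0 < i) (hik : i ≤ k) :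
    SpecialPath k i (List.replicate (k - i) SE) := by
  induction hj : k - i generalizing i with
  | zero =>
    obtain rfl : i = k := by omega
    simpa [SpecialPath, validPath_nil, pathHeight] using hi
  | succ j ih =>
    rw [List.replicate_succ, specialPath_SE_cons hi (by omega)]
    exact ih (by omega) (by omega) (by omega)

lemma numPeaks_replicate (n : ℕ) : numPeaks (List.replicate n SE) = 0 := by
  induction n with
  | zero => rfl
  | succ n ih => rw [List.replicate_succ, numPeaks_cons_of_ne_NE (by decide), ih]

lemma pathWeight_replicate (n : ℕ) : pathWeight (List.replicate n SE) = 0 := by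
  induction n with
  | zero => simp [pathWeight, majorIndex, southSteps]
  | succ n ih =>
    rw [List.replicate_succ, pathWeight_cons_of_ne_S (by decide), ← List.replicate_succ, ih,
      numPeaks_replicate]
    simp

lemma specialPaths_zero (hi : 0 < i) (hik : i ≤ k) :
    specialPaths k i 0 = {List.replicate (k - i) SE} := by
  ext l
  simp only [mem_specialPaths, Set.mem_singleton_iff]
  constructor
  · rintro ⟨hsp, hp⟩
    exact hsp.1.eq_replicate_of_numPeaks_eq_zero hp
  · rintro rfl
    exact ⟨specialPath_replicate hi hik, numPeaks_replicate _⟩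

lemma specialPaths_succ_eq_union (hik : i + 1 < k) :
    specialPaths k (i + 1) N =
      (SE :: ·) '' specialPaths k (i + 2) N ∪ (NE :: ·) '' neTails k i N := by
  ext l
  simp only [Set.mem_union, Set.mem_image, mem_specialPaths, mem_neTails]
  constructor
  · rintro ⟨hsp, hN⟩
    rcases l with _ | ⟨s, t⟩
    · exact absurd (validPath_nil.1 hsp.1) (by omega)
    cases s with
    | NE => exact Or.inr ⟨t, ⟨hsp, hN⟩, rfl⟩
    | SE =>
      refine Or.inl ⟨t, ⟨(specialPath_SE_cons (by omega) hik).1 hsp, ?_⟩, rfl⟩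
      rwa [numPeaks_cons_of_ne_NE (by decide)] at hN
    | S => exact absurd hsp.1 not_validPath_S_cons
    | E => exact absurd (validPath_E_cons.1 hsp.1).1 (by omega)
  · rintro (⟨t, ⟨hsp, hN⟩, rfl⟩ | ⟨t, h, rfl⟩)
    · exact ⟨(specialPath_SE_cons (by omega) hik).2 hsp,
        by rwa [numPeaks_cons_of_ne_NE (by decide)]⟩
    · exact h

lemma specialPaths_self_eq_union (hN : 0 < N) :
    specialPaths (k + 1) (k + 1) N =
      (E :: ·) '' specialPaths (k + 1) (k + 1) N ∪ (NE :: ·) '' neTails (k + 1) k N := by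
  ext l
  simp only [Set.mem_union, Set.mem_image, mem_specialPaths, mem_neTails]
  constructor
  · rintro ⟨hsp, hN'⟩
    rcases l with _ | ⟨s, t⟩
    · simp [numPeaks] at hN'
      omega
    cases s with
    | NE => exact Or.inr ⟨t, ⟨hsp, hN'⟩, rfl⟩
    | E =>
      refine Or.inl ⟨t, ⟨((specialPath_E_cons k.succ_pos).1 hsp).1, ?_⟩, rfl⟩
      rwa [numPeaks_cons_of_ne_NE (by decide)] at hN'
    | S => exact absurd hsp.1 not_validPath_S_cons
    | SE => exact absurd (validPath_SE_cons.1 hsp.1).1 (by simp)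
  · rintro (⟨t, ⟨hsp, hN'⟩, rfl⟩ | ⟨t, h, rfl⟩)
    · have ht : t ≠ [] := by rintro rfl; simp [numPeaks] at hN'; omega
      exact ⟨(specialPath_E_cons k.succ_pos).2 ⟨hsp, ht⟩,
        by rwa [numPeaks_cons_of_ne_NE (by decide)]⟩
    · exact h

lemma neTails_succ_eq_union (hik : i + 1 < k) :
    neTails k (i + 1) (N + 1) = (NE :: ·) '' neTails k i (N + 1) ∪
      ((S :: ·) '' specialPaths k (i + 2) N ∪ (SE :: ·) '' specialPaths k (i + 2) N) := by
  have hNE {u : List PStep} := specialPath_NE_cons (t := u) hik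
  ext t
  simp only [Set.mem_union, Set.mem_image, mem_specialPaths, mem_neTails]
  constructor
  · rintro ⟨hsp, hN⟩
    rcases t with _ | ⟨s, u⟩
    · exact absurd ((hNE (by simp)).1 hsp).2 (by simp)
    cases s with
    | NE =>
      exact Or.inl ⟨u, ⟨((hNE (by simp)).1 hsp).1, by rwa [numPeaks_NE_NE_cons] at hN⟩, rfl⟩
    | S =>
      refine Or.inr (Or.inl ⟨u, ⟨(specialPath_NE_S_cons (by omega) (by omega)).1 hsp, ?_⟩, rfl⟩)
      simpa [numPeaks_NE_cons_cons] using hN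
    | SE =>
      refine Or.inr (Or.inr ⟨u, ⟨?_, by simpa [numPeaks_NE_cons_cons] using hN⟩, rfl⟩)
      exact (specialPath_SE_cons (by omega) hik).1 ((hNE (by simp)).1 hsp).1
    | E => exact absurd (validPath_E_cons.1 ((hNE (by simp)).1 hsp).1.1).1 (by omega)
  · rintro (⟨u, ⟨hsp, hN⟩, rfl⟩ | ⟨u, ⟨hsp, hN⟩, rfl⟩ | ⟨u, ⟨hsp, hN⟩, rfl⟩)
    · exact ⟨(hNE (by simp)).2 ⟨hsp, by simp⟩, by rwa [numPeaks_NE_NE_cons]⟩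
    · exact ⟨(specialPath_NE_S_cons (by omega) (by omega)).2 hsp,
        by simp [numPeaks_NE_cons_cons, hN]⟩
    · exact ⟨(hNE (by simp)).2 ⟨(specialPath_SE_cons (by omega) hik).2 hsp, by simp⟩,
        by simp [numPeaks_NE_cons_cons, hN]⟩

lemma neTails_zero_eq_empty : neTails k 0 N = ∅ := by
  refine Set.eq_empty_of_forall_notMem fun t ⟨hsp, _⟩ => ?_
  have := hsp.2 1
  simp [pathHeight, stepDy] at this
  omega

end Decomposition

section Recurrences

open MvPowerSeries

variable {k i N : ℕ}

lemma EgfP_zero (hi : 0 < i) (hik : i ≤ k) : EgfP k i 0 = 1 := by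
  rw [EgfP_eq_genFun, specialPaths_zero hi hik, genFun_singleton, pathWeight_replicate,
    monomial_zero_one]

lemma EgfP_eq_of_lt (hi : 0 < i) (hik : i < k) :
    EgfP k i N = X 0 ^ N * EgfP k (i + 1) N + X 0 ^ N * GgfP k (i - 1) N := by
  obtain ⟨i, rfl⟩ := Nat.exists_eq_add_one_of_ne_zero hi.ne'
  have hfin := finite_specialPaths_fibre (k := k) (i := i + 1) (N := N)
  rw [specialPaths_succ_eq_union hik] at hfin
  rw [EgfP_eq_genFun, specialPaths_succ_eq_union hik,
    genFun_union (disjoint_image_cons (by decide) _ _) hfin,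
    genFun_image_cons (by decide) fun t ht => (numPeaks_cons_of_ne_NE (by decide)).trans ht.2,
    genFun_image_cons (by decide) fun t ht => ht.2, ← EgfP_eq_genFun, ← GgfP_eq_genFun,
    Nat.add_sub_cancel]

lemma EgfP_self (hk : 0 < k) (hN : 0 < N) :
    EgfP k k N = X 0 ^ N * (1 - X 0 ^ N)⁻¹ * GgfP k (k - 1) N := by
  obtain ⟨k, rfl⟩ := Nat.exists_eq_add_one_of_ne_zero hk.ne'
  have hfin := finite_specialPaths_fibre (k := k + 1) (i := k + 1) (N := N)
  rw [specialPaths_self_eq_union hN] at hfin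
  have hrec : EgfP (k + 1) (k + 1) N =
      X 0 ^ N * EgfP (k + 1) (k + 1) N + X 0 ^ N * GgfP (k + 1) k N := by
    conv_lhs => rw [EgfP_eq_genFun, specialPaths_self_eq_union hN]
    rw [genFun_union (disjoint_image_cons (by decide) _ _) hfin,
      genFun_image_cons (by decide) fun t ht => (numPeaks_cons_of_ne_NE (by decide)).trans ht.2,
      genFun_image_cons (by decide) fun t ht => ht.2, ← EgfP_eq_genFun, ← GgfP_eq_genFun]
  have hunit : constantCoeff (1 - X 0 ^ N : MvPowerSeries (Fin 2) ℚ) ≠ 0 := by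
    simp [hN.ne']
  rw [Nat.add_sub_cancel, mul_right_comm, MvPowerSeries.eq_mul_inv_iff_mul_eq hunit]
  linear_combination hrec

lemma GgfP_eq_of_lt (hi : 0 < i) (hik : i < k) (hN : 0 < N) :
    GgfP k i N = X 0 ^ N * GgfP k (i - 1) N + (X 1 + X 0 ^ (N - 1)) * EgfP k (i + 1) (N - 1) := by
  obtain ⟨i, rfl⟩ := Nat.exists_eq_add_one_of_ne_zero hi.ne'
  obtain ⟨N, rfl⟩ := Nat.exists_eq_add_one_of_ne_zero hN.ne'
  have hfin := finite_neTails_fibre (k := k) (i := i + 1) (N := N + 1)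
  rw [neTails_succ_eq_union hik] at hfin
  rw [GgfP_eq_genFun, neTails_succ_eq_union hik,
    genFun_union (Disjoint.union_right (disjoint_image_cons (by decide) _ _)
      (disjoint_image_cons (by decide) _ _)) hfin,
    genFun_union (disjoint_image_cons (by decide) _ _)
      fun d => (hfin d).subset fun _ hx => ⟨Or.inr hx.1, hx.2⟩,
    genFun_image_cons (by decide) fun t ht => ht.2, genFun_image_S_cons,
    genFun_image_cons (by decide) fun t ht => (numPeaks_cons_of_ne_NE (by decide)).trans ht.2,
    ← EgfP_eq_genFun, ← GgfP_eq_genFun, Nat.add_sub_cancel, Nat.add_sub_cancel]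
  ring

lemma GgfP_zero_eq_zero : GgfP k 0 N = 0 := by
  rw [GgfP_eq_genFun, neTails_zero_eq_empty, genFun_empty]

end Recurrences

open MvPowerSeries in
/-- **Proposition 3.1.** The recurrences satisfied by the path generating functions
`Ē_{k,i}(N)` and `Γ̄_{k,i}(N)`, with `q = X 0` and `a = X 1`. -/
theorem path_recurrences (k : ℕ) (hk : 1 ≤ k) :
    (∀ i, 1 ≤ i → i ≤ k → EgfP k i 0 = 1) ∧
    (∀ i N, 1 ≤ i → i < k →
      EgfP k i N = (X 0 : MvPowerSeries (Fin 2) ℚ) ^ N * EgfP k (i + 1) N +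
        (X 0 : MvPowerSeries (Fin 2) ℚ) ^ N * GgfP k (i - 1) N) ∧
    (∀ i N, 0 < i → i < k → 1 ≤ N →
      GgfP k i N = (X 0 : MvPowerSeries (Fin 2) ℚ) ^ N * GgfP k (i - 1) N +
        ((X 1 : MvPowerSeries (Fin 2) ℚ) + (X 0 : MvPowerSeries (Fin 2) ℚ) ^ (N - 1)) *
          EgfP k (i + 1) (N - 1)) ∧
    (∀ N, 1 ≤ N →
      EgfP k k N = (X 0 : MvPowerSeries (Fin 2) ℚ) ^ N *
        (1 - (X 0 : MvPowerSeries (Fin 2) ℚ) ^ N)⁻¹ * GgfP k (k - 1) N) ∧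
    (∀ N, GgfP k 0 N = 0) :=
  ⟨fun _ hi hik => EgfP_zero hi hik, fun _ _ hi hik => EgfP_eq_of_lt hi hik,
    fun _ _ hi hik hN => GgfP_eq_of_lt hi hik hN, fun _ hN => EgfP_self hk hN,
    fun _ => GgfP_zero_eq_zero⟩

end Paper
end

section
/- For integers k ≥ i ≥ 1 and complex a, q with 0 < |q| < 1 and a such that all Pochhammer symbols appearing are nonzero (e.g. a > 0 real), J_{k,i}(−a,1,q) = ((−aq;q)_∞/(q;q)_∞) Σ_{n=−∞}^{∞} (−1)^n a^n q^{kn² + n(k+1−i)} (−1/a;q)_n / (−aq;q)_n. -/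
/-!
Write `b = -a`. At `x = q` the factor `(q;q)_n (q^{n+1};q)_∞` in `H_{k,j}(b,q,q)` is `(q;q)_∞`,
so `(q;q)_∞ J_{k,i}(b,1,q)` is the series of
`b^n q^{kn²+(k+1-i)n} (1 - q^{(2n+1)i}) (1/b;q)_n (bq^{n+2};q)_∞` minus `bq` times the same
series with `i - 1`. Peeling one factor off `(bq^{n+1};q)_∞` and off `(1/b;q)_{n+1}` splits its
`n`-th term into `(bq;q)_∞` times the bilateral summands at `n` and at `-(n+1)`; the latter are
computed with the reflection `(x;q)_{-N} (-x)^N (q/x;q)_N = q^{N(N+1)/2}`. Every series involved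
is `zⁿ q^{kn²+dn}` times a bounded factor, hence absolutely convergent since `k ≥ 1`.
-/

namespace Paper

open scoped Classical

/-- The infinite q-Pochhammer symbol `(x;q)_∞ = ∏_{i≥0} (1 - x qⁱ)`. -/
noncomputable def qPochInf (x q : ℂ) : ℂ := ∏' i : ℕ, (1 - x * q ^ i)

/-- The finite q-Pochhammer symbol `(x;q)_N = ∏_{i=0}^{N-1} (1 - x qⁱ)`. -/
noncomputable def qPochN (x q : ℂ) (N : ℕ) : ℂ := ∏ i ∈ Finset.range N, (1 - x * q ^ i)

/-- The q-Pochhammer symbol with arbitrary integer index,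
`(x;q)_n = (x;q)_∞ / (x qⁿ;q)_∞`. -/
noncomputable def qPochZ (x q : ℂ) (n : ℤ) : ℂ := qPochInf x q / qPochInf (x * q ^ n) q


/-- Andrews' function
`H_{k,i}(a,x,q) = Σ_{n≥0} x^{kn} q^{kn²+n-in} aⁿ (1-xⁱq^{2ni}) (axq^{n+1};q)_∞ (1/a;q)_n
                   / ((q;q)_n (xqⁿ;q)_∞)`. -/
noncomputable def Hgf (k i : ℕ) (a x q : ℂ) : ℂ :=
  ∑' n : ℕ, x ^ (k * n) * q ^ ((k : ℤ) * (n : ℤ) ^ 2 + (n : ℤ) - (i : ℤ) * (n : ℤ)) *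
    a ^ n * (1 - x ^ i * q ^ (2 * n * i)) * qPochInf (a * x * q ^ (n + 1)) q *
    qPochN (1 / a) q n / (qPochN q q n * qPochInf (x * q ^ n) q)

/-- Andrews' function `J_{k,i}(a,x,q) = H_{k,i}(a,xq,q) - axq H_{k,i-1}(a,xq,q)`. -/
noncomputable def Jgf (k i : ℕ) (a x q : ℂ) : ℂ :=
  Hgf k i a (x * q) q - a * x * q * Hgf k (i - 1) a (x * q) q

open Filter Topology Finset Asymptotics

section QPochhammer

variable {x q : ℂ}

lemma summable_norm_mul_pow (x : ℂ) (hq : ‖q‖ < 1) : Summable fun i : ℕ => ‖x * q ^ i‖ := by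
  simpa [norm_mul, norm_pow] using
    (summable_geometric_of_lt_one (norm_nonneg q) hq).mul_left ‖x‖

lemma multipliable_one_sub_mul_pow (x : ℂ) (hq : ‖q‖ < 1) :
    Multipliable fun i : ℕ => 1 - x * q ^ i := by
  simpa [sub_eq_add_neg] using multipliable_one_add_of_summable (f := fun i : ℕ => -(x * q ^ i))
    (by simpa using summable_norm_mul_pow x hq)

lemma qPochInf_ne_zero (hq : ‖q‖ < 1) (h : ∀ i : ℕ, 1 - x * q ^ i ≠ 0) : qPochInf x q ≠ 0 := by
  simpa [qPochInf, sub_eq_add_neg] using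
    tprod_one_add_ne_zero_of_summable (f := fun i : ℕ => -(x * q ^ i))
      (by simpa [sub_eq_add_neg] using h) (by simpa using summable_norm_mul_pow x hq)

lemma qPochInf_eq_qPochN_mul (hq : ‖q‖ < 1) (n : ℕ) :
    qPochInf x q = qPochN x q n * qPochInf (x * q ^ n) q := by
  have hpow (i : ℕ) : x * q ^ n * q ^ i = x * q ^ (i + n) := by ring
  simp only [qPochInf, qPochN, hpow]
  exact ((multipliable_one_sub_mul_pow (x * q ^ n) hq).congr fun i => by
    rw [hpow]).prod_mul_tprod_nat_mul'.symm

lemma qPochInf_eq_one_sub_mul (hq : ‖q‖ < 1) : qPochInf x q = (1 - x) * qPochInf (x * q) q := by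
  simpa [qPochN] using qPochInf_eq_qPochN_mul (x := x) hq 1

lemma qPochN_succ (x q : ℂ) (n : ℕ) : qPochN x q (n + 1) = qPochN x q n * (1 - x * q ^ n) :=
  prod_range_succ _ n

lemma qPochN_succ' (x q : ℂ) (n : ℕ) : qPochN x q (n + 1) = (1 - x) * qPochN (x * q) q n := by
  simp only [qPochN, prod_range_succ', pow_zero, mul_one, pow_succ', mul_assoc, mul_comm]

lemma tendsto_qPochN (hq : ‖q‖ < 1) : Tendsto (qPochN x q) atTop (𝓝 (qPochInf x q)) :=
  (multipliable_one_sub_mul_pow x hq).hasProd.tendsto_prod_nat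

lemma tendsto_qPochInf_mul_pow (hq : ‖q‖ < 1) (h : qPochInf x q ≠ 0) :
    Tendsto (fun n => qPochInf (x * q ^ n) q) atTop (𝓝 1) := by
  have htail (n : ℕ) : qPochInf (x * q ^ n) q = qPochInf x q / qPochN x q n := by
    have hsplit := qPochInf_eq_qPochN_mul (x := x) hq n
    rw [hsplit] at h ⊢
    rw [mul_div_cancel_left₀ _ (left_ne_zero_of_mul h)]
  have hlim := (tendsto_const_nhds (x := qPochInf x q)).div (tendsto_qPochN hq) h
  rw [div_self h] at hlim
  exact hlim.congr fun n => (htail n).symm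

lemma qPochZ_natCast (hq : ‖q‖ < 1) {n : ℕ} (h : qPochInf (x * q ^ n) q ≠ 0) :
    qPochZ x q n = qPochN x q n := by
  rw [qPochZ, zpow_natCast, qPochInf_eq_qPochN_mul hq n, mul_div_cancel_right₀ _ h]

lemma qPochN_mul_zpow_neg_mul_pow_choose (hq : q ≠ 0) (hx : x ≠ 0) (N : ℕ) :
    qPochN (x * q ^ (-(N : ℤ))) q N * q ^ (N + 1).choose 2 = (-x) ^ N * qPochN (q / x) q N := by
  induction N with
  | zero => simp [qPochN]
  | succ N ih =>
    have hshift : x * q ^ (-((N + 1 : ℕ) : ℤ)) * q = x * q ^ (-(N : ℤ)) := by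
      rw [mul_assoc, ← zpow_add_one₀ hq]
      push_cast
      ring_nf
    have hfactor : (1 - x * q ^ (-((N + 1 : ℕ) : ℤ))) * q ^ (N + 1) = -x * (1 - q / x * q ^ N) := by
      rw [zpow_neg, zpow_natCast]
      field_simp
      ring
    rw [qPochN_succ', hshift, qPochN_succ, Nat.choose_succ_succ, Nat.choose_one_right, pow_add,
      pow_succ (-x)]
    calc (1 - x * q ^ (-((N + 1 : ℕ) : ℤ))) * qPochN (x * q ^ (-(N : ℤ))) q N *
          (q ^ (N + 1) * q ^ (N + 1).choose 2)
        = (1 - x * q ^ (-((N + 1 : ℕ) : ℤ))) * q ^ (N + 1) *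
          (qPochN (x * q ^ (-(N : ℤ))) q N * q ^ (N + 1).choose 2) := by ring
      _ = (-x) ^ N * -x * (qPochN (q / x) q N * (1 - q / x * q ^ N)) := by
        rw [hfactor, ih]; ring

lemma qPochZ_neg_natCast_mul (hq1 : ‖q‖ < 1) (hq : q ≠ 0) (hx : x ≠ 0) {N : ℕ}
    (h : qPochInf (x * q ^ (-(N : ℤ))) q ≠ 0) :
    qPochZ x q (-N) * ((-x) ^ N * qPochN (q / x) q N) = q ^ (N + 1).choose 2 := by
  have hsplit := qPochInf_eq_qPochN_mul (x := x * q ^ (-(N : ℤ))) hq1 N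
  rw [mul_assoc, ← zpow_natCast q N, ← zpow_add₀ hq, neg_add_cancel, zpow_zero, mul_one] at hsplit
  rw [hsplit] at h
  obtain ⟨hP, hI⟩ := mul_ne_zero_iff.mp h
  rw [qPochZ, hsplit, ← qPochN_mul_zpow_neg_mul_pow_choose hq hx N]
  field_simp

end QPochhammer

lemma summable_pow_mul_pow_sq_mul {q : ℂ} (hq : ‖q‖ < 1) {k : ℕ} (hk : 0 < k) (z : ℂ) (d : ℕ)
    {v : ℕ → ℂ} (hv : v =O[atTop] fun _ => (1 : ℝ)) :
    Summable fun n : ℕ => z ^ n * q ^ (k * n ^ 2 + d * n) * v n := by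
  have hratio : Tendsto (fun n : ℕ => z * q ^ (k * n + d)) atTop (𝓝 0) := by
    have hqk : Tendsto (fun n : ℕ => (q ^ k) ^ n) atTop (𝓝 0) :=
      tendsto_pow_atTop_nhds_zero_of_norm_lt_one
        (by rw [norm_pow]; exact pow_lt_one₀ (norm_nonneg q) hq hk.ne')
    simpa [pow_add, pow_mul, mul_assoc] using (hqk.mul_const (q ^ d)).const_mul z
  have hgeom : (fun n : ℕ => z ^ n * q ^ (k * n ^ 2 + d * n)) =O[atTop]
      fun n => ((1 : ℝ) / 2) ^ n := by
    refine IsBigO.of_bound 1 ?_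
    have hsmall := hratio.norm
    rw [norm_zero] at hsmall
    filter_upwards [hsmall.eventually_le_const (by norm_num : (0 : ℝ) < 1 / 2)] with n hn
    have hpow : z ^ n * q ^ (k * n ^ 2 + d * n) = (z * q ^ (k * n + d)) ^ n := by ring
    rw [hpow, norm_pow, one_mul, norm_pow, Real.norm_of_nonneg (by norm_num)]
    exact pow_le_pow_left₀ (norm_nonneg _) hn n
  have hbound := hgeom.mul hv
  simp only [mul_one] at hbound
  exact summable_of_isBigO_nat summable_geometric_two hbound

lemma isBigO_one_sub_pow {q : ℂ} (hq : ‖q‖ < 1) (e : ℕ → ℕ) :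
    (fun n => 1 - q ^ e n) =O[atTop] fun _ => (1 : ℝ) := by
  refine IsBigO.of_bound 2 (Eventually.of_forall fun n => ?_)
  calc ‖1 - q ^ e n‖ ≤ ‖(1 : ℂ)‖ + ‖q‖ ^ e n := by rw [← norm_pow]; exact norm_sub_le _ _
    _ ≤ 2 * ‖(1 : ℝ)‖ := by
      norm_num
      linarith [pow_le_one₀ (n := e n) (norm_nonneg q) hq.le]

/-- The `n`-th term of `(q;q)_∞ H_{k,j}(a,q,q)`. -/
noncomputable def hgfTerm (k j : ℕ) (a q : ℂ) (n : ℕ) : ℂ :=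
  a ^ n * q ^ (k * n ^ 2 + (k + 1 - j) * n) * (1 - q ^ ((2 * n + 1) * j)) *
    qPochN (1 / a) q n * qPochInf (a * q * q ^ (n + 1)) q

/-- `bilateralTerm k i (-a) q n` is the summand of the series in `J_eq_E`. -/
noncomputable def bilateralTerm (k i : ℕ) (a q : ℂ) (n : ℤ) : ℂ :=
  a ^ n * q ^ ((k : ℤ) * n ^ 2 + ((k : ℤ) + 1 - (i : ℤ)) * n) *
    (qPochZ (1 / a) q n / qPochZ (a * q) q n)

/-- `posTerm k i a q n` and `negTerm k i a q m` are `(aq;q)_∞` times `bilateralTerm k i a q` at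
`n` and at `-(m+1)`. -/
noncomputable def posTerm (k i : ℕ) (a q : ℂ) (n : ℕ) : ℂ :=
  a ^ n * q ^ (k * n ^ 2 + (k + 1 - i) * n) * qPochN (1 / a) q n * qPochInf (a * q * q ^ n) q

noncomputable def negTerm (k i : ℕ) (a q : ℂ) (m : ℕ) : ℂ :=
  a ^ (m + 1) * q ^ ((m + 1) * (k * m + i)) * qPochN (1 / a) q (m + 1) *
    qPochInf (a * q * q ^ (m + 1)) q

section Terms

variable {k : ℕ} {a q : ℂ}

lemma Hgf_self (hq1 : ‖q‖ < 1) (hq : q ≠ 0) {j : ℕ} (hj : j ≤ k + 1) :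
    Hgf k j a q q = (∑' n, hgfTerm k j a q n) / qPochInf q q := by
  rw [Hgf, ← tsum_div_const]
  refine tsum_congr fun n => ?_
  have hexp : q ^ (k * n) * q ^ ((k : ℤ) * (n : ℤ) ^ 2 + (n : ℤ) - (j : ℤ) * (n : ℤ)) =
      q ^ (k * n ^ 2 + (k + 1 - j) * n) := by
    rw [← zpow_natCast, ← zpow_natCast, ← zpow_add₀ hq]
    push_cast [Nat.cast_sub hj]
    ring_nf
  rw [← qPochInf_eq_qPochN_mul hq1 n, hgfTerm, ← hexp]
  ring

lemma summable_hgfTerm (hq : ‖q‖ < 1) (hk : 0 < k) (h : qPochInf (a * q) q ≠ 0) (j : ℕ) :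
    Summable (hgfTerm k j a q) := by
  have hv := ((isBigO_one_sub_pow hq fun n => (2 * n + 1) * j).mul
    ((tendsto_qPochN (x := 1 / a) hq).isBigO_one ℝ)).mul
    (((tendsto_qPochInf_mul_pow hq h).comp (tendsto_add_atTop_nat 1)).isBigO_one ℝ)
  simp only [mul_one] at hv
  refine (summable_pow_mul_pow_sq_mul hq hk a (k + 1 - j) hv).congr fun n => ?_
  simp only [hgfTerm, Function.comp_apply]
  ring

lemma summable_posTerm (hq : ‖q‖ < 1) (hk : 0 < k) (h : qPochInf (a * q) q ≠ 0) (i : ℕ) :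
    Summable (posTerm k i a q) := by
  have hv := ((tendsto_qPochN (x := 1 / a) hq).mul (tendsto_qPochInf_mul_pow hq h)).isBigO_one ℝ
  refine (summable_pow_mul_pow_sq_mul hq hk a (k + 1 - i) hv).congr fun n => ?_
  simp only [posTerm]
  ring

lemma summable_negTerm (hq : ‖q‖ < 1) (hk : 0 < k) (h : qPochInf (a * q) q ≠ 0) (i : ℕ) :
    Summable (negTerm k i a q) := by
  have hv := ((tendsto_const_nhds (x := a * q ^ i)).mul
    (((tendsto_qPochN (x := 1 / a) hq).mul (tendsto_qPochInf_mul_pow hq h)).comp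
      (tendsto_add_atTop_nat 1))).isBigO_one ℝ
  refine (summable_pow_mul_pow_sq_mul hq hk a (k + i) hv).congr fun m => ?_
  simp only [negTerm, Function.comp_apply]
  ring

lemma hgfTerm_sub_mul_hgfTerm (hq : ‖q‖ < 1) (ha : a ≠ 0) {s : ℕ} (hs : s ≤ k) (n : ℕ) :
    hgfTerm k (s + 1) a q n - a * q * hgfTerm k s a q n =
      posTerm k (s + 1) a q n + negTerm k (s + 1) a q n := by
  obtain ⟨d, rfl⟩ := Nat.exists_eq_add_of_le hs
  have he1 : s + d + 1 - (s + 1) = d := by omega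
  have he2 : s + d + 1 - s = d + 1 := by omega
  have hpeel : qPochInf (a * q * q ^ n) q =
      (1 - a * q * q ^ n) * qPochInf (a * q * q ^ (n + 1)) q := by
    rw [qPochInf_eq_one_sub_mul hq, mul_assoc (a * q), ← pow_succ]
  simp only [hgfTerm, posTerm, negTerm, he1, he2, hpeel, qPochN_succ]
  linear_combination a ^ n * q ^ ((n + 1) * ((s + d) * n + (s + 1)) + n) * qPochN (1 / a) q n *
    qPochInf (a * q * q ^ (n + 1)) q * mul_inv_cancel₀ ha

lemma mul_bilateralTerm_natCast (hq : ‖q‖ < 1) {i : ℕ} (hi : i ≤ k + 1) {n : ℕ}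
    (hP : qPochInf (1 / a * q ^ n) q ≠ 0) (hQ : qPochInf (a * q) q ≠ 0) :
    qPochInf (a * q) q * bilateralTerm k i a q n = posTerm k i a q n := by
  have hexp : (k : ℤ) * (n : ℤ) ^ 2 + ((k : ℤ) + 1 - (i : ℤ)) * n =
      ((k * n ^ 2 + (k + 1 - i) * n : ℕ) : ℤ) := by
    push_cast [Nat.cast_sub hi]
    ring
  rw [bilateralTerm, hexp, zpow_natCast, zpow_natCast, qPochZ_natCast hq hP, qPochZ, zpow_natCast,
    posTerm]
  field_simp

lemma mul_bilateralTerm_neg_succ (hq1 : ‖q‖ < 1) (hq : q ≠ 0) (ha : a ≠ 0) (i m : ℕ)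
    (hP : qPochInf (1 / a * q ^ (-((m + 1 : ℕ) : ℤ))) q ≠ 0)
    (hQ : qPochInf (a * q * q ^ (-((m + 1 : ℕ) : ℤ))) q ≠ 0) :
    qPochInf (a * q) q * bilateralTerm k i a q (-((m : ℤ) + 1)) = negTerm k i a q m := by
  have hZP := qPochZ_neg_natCast_mul hq1 hq (one_div_ne_zero ha) hP
  have hZQ := qPochZ_neg_natCast_mul hq1 hq (mul_ne_zero ha hq) hQ
  rw [show q / (1 / a) = a * q by field_simp] at hZP
  rw [show q / (a * q) = 1 / a by field_simp] at hZQ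
  have hT : q ^ (m + 1 + 1).choose 2 ≠ 0 := pow_ne_zero _ hq
  have hDP := right_ne_zero_of_mul (hZP ▸ hT)
  have hDQ := right_ne_zero_of_mul (hZQ ▸ hT)
  have hN : -((m : ℤ) + 1) = -((m + 1 : ℕ) : ℤ) := by push_cast; ring
  have hexp : (k : ℤ) * (-((m + 1 : ℕ) : ℤ)) ^ 2 + ((k : ℤ) + 1 - i) * (-((m + 1 : ℕ) : ℤ)) =
      (((m + 1) * (k * m + i) : ℕ) : ℤ) - ((m + 1 : ℕ) : ℤ) := by
    push_cast
    ring
  rw [hN, bilateralTerm, hexp, zpow_sub₀ hq, zpow_neg, zpow_natCast, zpow_natCast, zpow_natCast,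
    eq_div_of_mul_eq hDP hZP, eq_div_of_mul_eq hDQ hZQ,
    qPochInf_eq_qPochN_mul (x := a * q) hq1 (m + 1), negTerm, neg_pow (1 / a), neg_pow (a * q),
    one_div_pow]
  field_simp [left_ne_zero_of_mul hDP, right_ne_zero_of_mul hDP, right_ne_zero_of_mul hDQ]
  ring

lemma qPochInf_one_div_mul_zpow_ne_zero (hq1 : ‖q‖ < 1) (hq : q ≠ 0)
    (hQ : ∀ t : ℤ, qPochInf (a * q * q ^ t) q ≠ 0) (t : ℤ) : qPochInf (1 / a * q ^ t) q ≠ 0 := by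
  refine qPochInf_ne_zero hq1 fun j hj => hQ (-(t + j) - 1) ?_
  have ha : a ≠ 0 := by
    rintro rfl
    simp at hj
  have hqa : a = q ^ (t + j) := by
    rw [zpow_add₀ hq, zpow_natCast]
    field_simp at hj
    linear_combination hj
  have hfactor : 1 - a * q * q ^ (-(t + j) - 1) = 0 := by
    rw [hqa, mul_assoc, ← zpow_one_add₀ hq, ← zpow_add₀ hq]
    ring_nf
    simp
  rw [qPochInf_eq_one_sub_mul hq1, hfactor, zero_mul]

lemma hasSum_mul_bilateralTerm (hq1 : ‖q‖ < 1) (hq : q ≠ 0) (ha : a ≠ 0) {s : ℕ} (hs : s + 1 ≤ k)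
    (hP : ∀ t : ℤ, qPochInf (1 / a * q ^ t) q ≠ 0) (hQ : ∀ t : ℤ, qPochInf (a * q * q ^ t) q ≠ 0) :
    HasSum (fun n : ℤ => qPochInf (a * q) q * bilateralTerm k (s + 1) a q n)
      ((∑' n, hgfTerm k (s + 1) a q n) - a * q * ∑' n, hgfTerm k s a q n) := by
  have hQ0 : qPochInf (a * q) q ≠ 0 := by simpa only [zpow_zero, mul_one] using hQ 0
  have hk : 0 < k := by omega
  have hpos : HasSum (fun n : ℕ => qPochInf (a * q) q * bilateralTerm k (s + 1) a q n)
      (∑' n, posTerm k (s + 1) a q n) := by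
    refine (summable_posTerm hq1 hk hQ0 _).hasSum.congr_fun fun n => ?_
    exact mul_bilateralTerm_natCast hq1 (by omega) (by rw [← zpow_natCast]; exact hP n) hQ0
  have hneg : HasSum (fun m : ℕ => qPochInf (a * q) q * bilateralTerm k (s + 1) a q (-(m + 1)))
      (∑' m, negTerm k (s + 1) a q m) := by
    refine (summable_negTerm hq1 hk hQ0 _).hasSum.congr_fun fun m => ?_
    exact mul_bilateralTerm_neg_succ hq1 hq ha _ m (hP _) (hQ _)
  suffices hval : (∑' n, hgfTerm k (s + 1) a q n) - a * q * ∑' n, hgfTerm k s a q n =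
      (∑' n, posTerm k (s + 1) a q n) + ∑' m, negTerm k (s + 1) a q m by
    rw [hval]
    exact hpos.of_nat_of_neg_add_one hneg
  rw [← tsum_mul_left, ← (summable_hgfTerm hq1 hk hQ0 _).tsum_sub
    ((summable_hgfTerm hq1 hk hQ0 _).mul_left _), ← (summable_posTerm hq1 hk hQ0 _).tsum_add
    (summable_negTerm hq1 hk hQ0 _)]
  exact tsum_congr (hgfTerm_sub_mul_hgfTerm hq1 ha (by omega))

end Terms

/-- `J_{k,i}(-a,1,q)` equals the right-hand side of equation (1.2). -/
theorem J_eq_E (k i : ℕ) (hi : 1 ≤ i) (hik : i ≤ k) (a q : ℂ)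
    (hq0 : 0 < ‖q‖) (hq1 : ‖q‖ < 1) (ha : a ≠ 0)
    (hpoch : ∀ m : ℤ, qPochZ (-(a * q)) q m ≠ 0) :
    Jgf k i (-a) 1 q =
      qPochInf (-(a * q)) q / qPochInf q q *
        ∑' n : ℤ, (-1 : ℂ) ^ n * a ^ n *
          q ^ ((k : ℤ) * n ^ 2 + ((k : ℤ) + 1 - (i : ℤ)) * n) *
          (qPochZ (-(1 / a)) q n / qPochZ (-(a * q)) q n) := by
  obtain ⟨s, rfl⟩ : ∃ s, i = s + 1 := ⟨i - 1, by omega⟩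
  have hq : q ≠ 0 := norm_pos_iff.mp hq0
  have hQ : ∀ t : ℤ, qPochInf (-a * q * q ^ t) q ≠ 0 := fun t h =>
    hpoch t (by rw [qPochZ, ← neg_mul, h, div_zero])
  have hsum := hasSum_mul_bilateralTerm hq1 hq (neg_ne_zero.mpr ha) hik
    (qPochInf_one_div_mul_zpow_ne_zero hq1 hq hQ) hQ
  have hterm (n : ℤ) : (-1 : ℂ) ^ n * a ^ n *
      q ^ ((k : ℤ) * n ^ 2 + ((k : ℤ) + 1 - ((s + 1 : ℕ) : ℤ)) * n) *
      (qPochZ (-(1 / a)) q n / qPochZ (-(a * q)) q n) = bilateralTerm k (s + 1) (-a) q n := by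
    rw [bilateralTerm, neg_eq_neg_one_mul a, mul_zpow, ← neg_eq_neg_one_mul,
      one_div_neg_eq_neg_one_div, neg_mul]
  simp only [Jgf, one_mul, mul_one, Nat.add_sub_cancel, hterm]
  rw [Hgf_self hq1 hq (by omega), Hgf_self hq1 hq (by omega), ← neg_mul, div_mul_eq_mul_div,
    ← tsum_mul_left, hsum.tsum_eq]
  ring

end Paper
end
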